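/- arXiv:2602.23394 — 14 statements merged into one kernel-verified Lean document; each statement's English description precedes it below -/
import Mathlib

section
/- For all positive reals t and α with α ≥ (1+√5)/2, and all natural numbers n ≥ 1, we have ⌊tα^n⌋ + ⌊tα^(n+1)⌋ ≤ ⌊tα^(n+2)⌋. -/
open Real goldenRatio

theorem add_one_le_sq_of_goldenRatio_le {α : ℝ} (h : φ ≤ α) : α + 1 ≤ α ^ 2 := by
  -- α² - α - 1 = (α - φ)(α + φ - 1), using φ² = φ + 1
  have hfactor : 0 ≤ (α - φ) * (α + φ - 1) :=
    mul_nonneg (sub_nonneg.2 h) (by linarith [one_lt_goldenRatio])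
  nlinarith [goldenRatio_sq]

theorem mul_pow_add_mul_pow_succ_le {R : Type*} [CommSemiring R] [PartialOrder R]
    [IsOrderedRing R] {t α : R} (ht : 0 ≤ t) (hα : 0 ≤ α) (h : α + 1 ≤ α ^ 2) (n : ℕ) :
    t * α ^ n + t * α ^ (n + 1) ≤ t * α ^ (n + 2) :=
  calc t * α ^ n + t * α ^ (n + 1) = t * α ^ n * (α + 1) := by ring
    _ ≤ t * α ^ n * α ^ 2 := mul_le_mul_of_nonneg_left h (mul_nonneg ht (pow_nonneg hα n))
    _ = t * α ^ (n + 2) := by ring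

theorem stmt_0_general (t α : ℝ) (ht : 0 < t) (hα : (1 + Real.sqrt 5) / 2 ≤ α)
    (n : ℕ) :
    ⌊t * α ^ n⌋ + ⌊t * α ^ (n + 1)⌋ ≤ ⌊t * α ^ (n + 2)⌋ := by
  have hαφ : φ ≤ α := hα
  have hα₀ : 0 ≤ α := goldenRatio_pos.le.trans hαφ
  exact (Int.le_floor_add _ _).trans <| Int.floor_mono <|
    mul_pow_add_mul_pow_succ_le ht.le hα₀ (add_one_le_sq_of_goldenRatio_le hαφ) n

theorem stmt_0 (t α : ℝ) (ht : 0 < t) (hα : (1 + Real.sqrt 5) / 2 ≤ α)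
    (n : ℕ) (hn : 1 ≤ n) :
    ⌊t * α ^ n⌋ + ⌊t * α ^ (n + 1)⌋ ≤ ⌊t * α ^ (n + 2)⌋ :=
  stmt_0_general t α ht hα n
end

section
/- Suppose S = (s_1, s_2, ...) is a sequence of positive integers, m is a positive integer not representable as a sum of distinct elements of S, r is a non-negative integer with s_1 + ... + s_r < m < s_{r+2}, and s_n + s_{n+1} ≤ s_{n+2} for all n > r. Then for all k ≥ 1, the number m + s_{r+3} + s_{r+5} + ... + s_{r+2k+1} is not representable as a sum of distinct elements of S. -/
theorem stmt_2 (s : ℕ → ℕ) (hs : ∀ n, 1 ≤ n → 0 < s n)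
    (m : ℕ) (hm : 0 < m)
    (hmrep : ¬ ∃ I : Finset ℕ, (∀ i ∈ I, 1 ≤ i) ∧ m = ∑ i ∈ I, s i)
    (r : ℕ)
    (h1 : ∑ i ∈ Finset.Icc 1 r, s i < m)
    (h2 : m < s (r + 2))
    (h3 : ∀ n, r < n → s n + s (n + 1) ≤ s (n + 2)) :
    ∀ k : ℕ, 1 ≤ k →
      ¬ ∃ I : Finset ℕ, (∀ i ∈ I, 1 ≤ i) ∧
        m + ∑ i ∈ Finset.Icc 1 k, s (r + 2 * i + 1) = ∑ i ∈ I, s i := by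
  set T : ℕ → ℕ := fun k => ∑ i ∈ Finset.Icc 1 k, s (r + 2 * i + 1) with hT
  have hTsucc : ∀ k, T (k + 1) = T k + s (r + 2 * k + 3) := by
    intro k
    have e : r + 2 * (k + 1) + 1 = r + 2 * k + 3 := by ring
    simp [hT, Finset.sum_Icc_succ_top (Nat.le_add_left 1 k), e]
  -- monotonicity from index r+2 onward
  have step : ∀ n, r + 2 ≤ n → s n ≤ s (n + 1) := by
    intro n hn
    obtain ⟨d, rfl⟩ := Nat.exists_eq_add_of_le hn
    have h := h3 (r + 1 + d) (by omega)
    have e1 : r + 1 + d + 1 = r + 2 + d := by ring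
    have e2 : r + 1 + d + 2 = r + 2 + d + 1 := by ring
    rw [e1, e2] at h
    exact le_trans (Nat.le_add_left _ _) h
  have mono : ∀ a b, r + 2 ≤ a → a ≤ b → s a ≤ s b := by
    intro a b ha hab
    obtain ⟨d, rfl⟩ := Nat.exists_eq_add_of_le hab
    clear hab
    induction d with
    | zero => exact le_refl _
    | succ d ih =>
        have : a + (d + 1) = (a + d) + 1 := by ring
        rw [this]
        exact le_trans ih (step _ (by omega))
  -- Lemma B : T k + s (r+2) ≤ s (r + 2k + 2)
  have lemB : ∀ k, T k + s (r + 2) ≤ s (r + 2 * k + 2) := by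
    intro k
    induction k with
    | zero => simp [hT]
    | succ k ih =>
        have h := h3 (r + 2 * k + 2) (by omega)
        have e1 : r + 2 * k + 2 + 1 = r + 2 * k + 3 := by ring
        have e2 : r + 2 * k + 2 + 2 = r + 2 * (k + 1) + 2 := by ring
        rw [e1, e2] at h
        have := hTsucc k
        omega
  -- Lemma C : ∑_{i=r+1}^{r+2k} s i ≤ T k
  have lemC : ∀ k, ∑ i ∈ Finset.Icc (r + 1) (r + 2 * k), s i ≤ T k := by
    intro k
    induction k with
    | zero => simp
    | succ k ih =>
        have e : r + 2 * (k + 1) = (r + 2 * k + 1) + 1 := by ring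
        rw [e, Finset.sum_Icc_succ_top (by omega), Finset.sum_Icc_succ_top (by omega)]
        have h := h3 (r + 2 * k + 1) (by omega)
        have e1 : r + 2 * k + 1 + 1 = r + 2 * k + 2 := by ring
        have e2 : r + 2 * k + 1 + 2 = r + 2 * k + 3 := by ring
        rw [e1, e2] at h
        rw [show r + 2 * k + 1 + 1 = r + 2 * k + 2 from by ring]
        have := hTsucc k
        omega
  suffices H : ∀ k, ¬ ∃ I : Finset ℕ, (∀ i ∈ I, 1 ≤ i) ∧ m + T k = ∑ i ∈ I, s i by
    intro k _
    exact H k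
  intro k
  induction k with
  | zero =>
      have : T 0 = 0 := by simp [hT]
      rw [this]
      simpa using hmrep
  | succ k ih =>
      rintro ⟨I, hI1, hIsum⟩
      -- all indices are at most r + 2k + 3
      have hbound : ∀ i ∈ I, i ≤ r + 2 * k + 3 := by
        intro i hi
        by_contra hgt
        push_neg at hgt
        have h4 : s (r + 2 * (k + 1) + 2) ≤ s i := mono _ _ (by omega) (by omega)
        have h5 : s i ≤ ∑ j ∈ I, s j := Finset.single_le_sum (fun j _ => Nat.zero_le _) hi
        have h6 := lemB (k + 1)
        omega
      by_cases hN : (r + 2 * k + 3) ∈ I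
      · -- remove the top element, get a representation of m + T k
        have hErase := Finset.add_sum_erase I s hN
        have hTs := hTsucc k
        exact ih ⟨I.erase (r + 2 * k + 3),
          fun i hi => hI1 i (Finset.mem_of_mem_erase hi), by omega⟩
      · -- I ⊆ Icc 1 (r + 2k + 2), sum too small
        have hsub : I ⊆ Finset.Icc 1 (r + 2 * k + 2) := by
          intro i hi
          have := hI1 i hi
          have := hbound i hi
          have : i ≠ r + 2 * k + 3 := fun h => hN (h ▸ hi)
          simp only [Finset.mem_Icc]
          omega
        have hle : ∑ i ∈ I, s i ≤ ∑ i ∈ Finset.Icc 1 (r + 2 * k + 2), s i :=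
          Finset.sum_le_sum_of_subset hsub
        have hsplit : ∑ i ∈ Finset.Icc 1 r, s i
            + ∑ i ∈ Finset.Icc (r + 1) (r + 2 * k + 2), s i
            = ∑ i ∈ Finset.Icc 1 (r + 2 * k + 2), s i := by
          rw [show Finset.Icc 1 r = Finset.Ioc 0 r from rfl,
              show Finset.Icc 1 (r + 2 * k + 2) = Finset.Ioc 0 (r + 2 * k + 2) from rfl,
              show Finset.Icc (r + 1) (r + 2 * k + 2)
                = Finset.Ioc r (r + 2 * k + 2) from Finset.Icc_add_one_left_eq_Ioc _ _]
          exact Finset.sum_Ioc_consecutive _ (by omega) (by omega)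
        have hC := lemC (k + 1)
        have e : r + 2 * (k + 1) = r + 2 * k + 2 := by ring
        rw [e] at hC
        have hTs := hTsucc k
        omega
end

section
/- If α ≥ (1+√5)/2, and there exist a positive integer m and a non-negative integer r with s_1 + ... + s_r < m < s_{r+1} (where s_n = ⌊tα^n⌋), then the sequence S_t(α) is not complete, i.e., infinitely many positive integers are not sums of distinct elements of S_t(α). -/
/-- The witness sequence: `XX s m r k = m + s(r+2) + s(r+4) + ... + s(r+2k)`. -/
private def XX (s : ℕ → ℤ) (m : ℤ) (r : ℕ) : ℕ → ℤ
  | 0 => m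
  | k+1 => XX s m r k + s (r + 2*k + 2)

private lemma aux_infinite (s : ℕ → ℤ) (hs0 : ∀ n, 0 ≤ s n)
    (hmono : ∀ a b : ℕ, a ≤ b → s a ≤ s b)
    (hfib : ∀ n : ℕ, s n + s (n+1) ≤ s (n+2))
    (m : ℤ) (hm : 0 < m) (r : ℕ)
    (h1 : (∑ i ∈ Finset.Icc 1 r, s i) < m) (h2 : m < s (r+1)) :
    {k : ℕ | 0 < k ∧ ¬ ∃ I : Finset ℕ, (∀ i ∈ I, 1 ≤ i) ∧
      (k : ℤ) = ∑ i ∈ I, s i}.Infinite := by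
  -- upper bound : XX k < s (r + 2k + 1)
  have hA : ∀ k, XX s m r k < s (r + 2*k + 1) := by
    intro k; induction k with
    | zero => simpa [XX] using h2
    | succ k ih =>
      have hf := hfib (r + 2*k + 1)
      have e1 : r + 2*k + 1 + 1 = r + 2*k + 2 := by ring
      have e2 : r + 2*k + 1 + 2 = r + 2*(k+1) + 1 := by ring
      rw [e1, e2] at hf
      simp only [XX]
      linarith
  -- lower bound : σ (r + 2k) < XX k + s (r + 2k)
  have hB : ∀ k, (∑ i ∈ Finset.Icc 1 (r + 2*k), s i) < XX s m r k + s (r + 2*k) := by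
    intro k; induction k with
    | zero =>
      simp only [XX, Nat.mul_zero, Nat.add_zero]
      have := hs0 r
      linarith
    | succ k ih =>
      have e : r + 2*(k+1) = (r + 2*k + 1) + 1 := by ring
      rw [e, Finset.sum_Icc_succ_top (by omega : 1 ≤ (r + 2*k + 1) + 1),
        Finset.sum_Icc_succ_top (by omega : 1 ≤ r + 2*k + 1)]
      have hf := hfib (r + 2*k)
      have e1 : r + 2*k + 1 + 1 = r + 2*k + 2 := by ring
      rw [e1] at hf
      simp only [XX]
      have e2 : r + 2*k + 1 + 1 = r + 2*k + 2 := by ring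
      rw [e2]
      linarith
  -- non-representability
  have hC : ∀ k, ¬ ∃ I : Finset ℕ, (∀ i ∈ I, 1 ≤ i) ∧ XX s m r k = ∑ i ∈ I, s i := by
    intro k; induction k with
    | zero =>
      rintro ⟨I, hI1, hIsum⟩
      have hle : ∀ i ∈ I, i ≤ r := by
        intro i hi
        by_contra hcon
        push_neg at hcon
        have h3 : s (r + 1) ≤ s i := hmono _ _ (by omega)
        have h4 : s i ≤ ∑ j ∈ I, s j := Finset.single_le_sum (fun j _ => hs0 j) hi
        have h5 := hA 0
        simp only [XX] at h5 hIsum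
        simp only [Nat.mul_zero, Nat.add_zero] at h5
        linarith
      have hsub : I ⊆ Finset.Icc 1 r := fun i hi => Finset.mem_Icc.2 ⟨hI1 i hi, hle i hi⟩
      have h6 : ∑ i ∈ I, s i ≤ ∑ i ∈ Finset.Icc 1 r, s i :=
        Finset.sum_le_sum_of_subset_of_nonneg hsub (fun i _ _ => hs0 i)
      simp only [XX] at hIsum
      linarith
    | succ k ih =>
      rintro ⟨I, hI1, hIsum⟩
      have hle : ∀ i ∈ I, i ≤ r + 2*(k+1) := by
        intro i hi
        by_contra hcon
        push_neg at hcon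
        have h3 : s (r + 2*(k+1) + 1) ≤ s i := hmono _ _ (by omega)
        have h4 : s i ≤ ∑ j ∈ I, s j := Finset.single_le_sum (fun j _ => hs0 j) hi
        have h5 := hA (k+1)
        linarith
      by_cases htop : (r + 2*(k+1)) ∈ I
      · -- remove the top element, get a representation of XX k
        apply ih
        have e : r + 2*(k+1) = r + 2*k + 2 := by ring
        rw [e] at htop
        refine ⟨I.erase (r + 2*k + 2), fun i hi => hI1 i (Finset.mem_of_mem_erase hi), ?_⟩
        have h7 := Finset.add_sum_erase I s htop
        simp only [XX] at hIsum
        linarith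
      · -- I ⊆ [1, r+2k+1], sum too small
        have hsub : I ⊆ Finset.Icc 1 (r + 2*k + 1) := by
          intro i hi
          refine Finset.mem_Icc.2 ⟨hI1 i hi, ?_⟩
          have := hle i hi
          have : i ≠ r + 2*(k+1) := fun h => htop (h ▸ hi)
          omega
        have h6 : ∑ i ∈ I, s i ≤ ∑ i ∈ Finset.Icc 1 (r + 2*k + 1), s i :=
          Finset.sum_le_sum_of_subset_of_nonneg hsub (fun i _ _ => hs0 i)
        have h7 := hB (k+1)
        have e : r + 2*(k+1) = (r + 2*k + 1) + 1 := by ring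
        rw [e, Finset.sum_Icc_succ_top (by omega : 1 ≤ (r + 2*k + 1) + 1)] at h7
        linarith
  -- positivity and monotonicity of XX
  have hpos : ∀ k, m ≤ XX s m r k := by
    intro k; induction k with
    | zero => simp [XX]
    | succ k ih => simp only [XX]; have := hs0 (r + 2*k + 2); linarith
  have hstep : ∀ k, XX s m r k < XX s m r (k+1) := by
    intro k
    simp only [XX]
    have h3 : s (r + 1) ≤ s (r + 2*k + 2) := hmono _ _ (by omega)
    linarith
  have hsm : StrictMono (fun k => XX s m r k) := strictMono_nat_of_lt_succ hstep
  apply Set.infinite_of_injective_forall_mem (f := fun k => (XX s m r k).toNat)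
  · intro a b hab
    have ha : ((XX s m r a).toNat : ℤ) = XX s m r a := Int.toNat_of_nonneg (by linarith [hpos a])
    have hb : ((XX s m r b).toNat : ℤ) = XX s m r b := Int.toNat_of_nonneg (by linarith [hpos b])
    apply hsm.injective
    simp only
    rw [← ha, ← hb]
    exact_mod_cast congrArg (fun n : ℕ => (n : ℤ)) hab
  · intro k
    have hk : ((XX s m r k).toNat : ℤ) = XX s m r k := Int.toNat_of_nonneg (by linarith [hpos k])
    constructor
    · have := hpos k; omega
    · rw [hk]
      exact hC k

theorem stmt_3 (t α : ℝ) (ht : 0 < t) (hα : (1 + Real.sqrt 5) / 2 ≤ α)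
    (m : ℕ) (hm : 0 < m) (r : ℕ)
    (h1 : (∑ i ∈ Finset.Icc 1 r, ⌊t * α ^ i⌋) < (m : ℤ))
    (h2 : (m : ℤ) < ⌊t * α ^ (r + 1)⌋) :
    {k : ℕ | 0 < k ∧
      ¬ ∃ I : Finset ℕ, (∀ i ∈ I, 1 ≤ i) ∧
        (k : ℤ) = ∑ i ∈ I, ⌊t * α ^ i⌋}.Infinite := by
  have hα1 : (1:ℝ) ≤ α := by
    nlinarith [Real.sq_sqrt (show (0:ℝ) ≤ 5 by norm_num), Real.sqrt_nonneg 5]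
  have hα0 : (0:ℝ) < α := by linarith
  have hquad : α + 1 ≤ α ^ 2 := by
    nlinarith [Real.sq_sqrt (show (0:ℝ) ≤ 5 by norm_num), Real.sqrt_nonneg 5,
      sq_nonneg (2*α - 1 - Real.sqrt 5)]
  have hs0 : ∀ n : ℕ, 0 ≤ ⌊t * α ^ n⌋ := by
    intro n
    apply Int.floor_nonneg.2
    positivity
  have hmono : ∀ a b : ℕ, a ≤ b → ⌊t * α ^ a⌋ ≤ ⌊t * α ^ b⌋ := by
    intro a b hab
    apply Int.floor_le_floor
    exact mul_le_mul_of_nonneg_left (pow_le_pow_right₀ hα1 hab) ht.le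
  have hfib : ∀ n : ℕ, ⌊t * α ^ n⌋ + ⌊t * α ^ (n+1)⌋ ≤ ⌊t * α ^ (n+2)⌋ := by
    intro n
    apply Int.le_floor.2
    push_cast
    have f1 := Int.floor_le (t * α ^ n)
    have f2 := Int.floor_le (t * α ^ (n+1))
    have hp : (0:ℝ) ≤ t * α ^ n := by positivity
    have key : t * α ^ n + t * α ^ (n+1) ≤ t * α ^ (n+2) := by
      have e1 : t * α ^ n + t * α ^ (n+1) = t * α ^ n * (1 + α) := by ring
      have e2 : t * α ^ (n+2) = t * α ^ n * α ^ 2 := by ring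
      rw [e1, e2]
      exact mul_le_mul_of_nonneg_left (by linarith) hp
    linarith
  have hm' : (0:ℤ) < (m:ℤ) := by exact_mod_cast hm
  exact aux_infinite (fun n => ⌊t * α ^ n⌋) hs0 hmono hfib (m:ℤ) hm' r h1 h2
end

section
/- Let S = (s_1, s_2, ...) be a sequence of positive integers. Assume there is a non-negative integer r such that s_{n+1} ≤ 1 + s_1 + ... + s_n for all n with 0 ≤ n ≤ r, and s_{n+1} ≤ 2s_n for all n > r. Then every positive integer is a sum of distinct elements of S. -/
theorem stmt_4 (s : ℕ → ℕ) (hs : ∀ n, 1 ≤ n → 0 < s n) (r : ℕ)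
    (h1 : ∀ n, n ≤ r → s (n + 1) ≤ 1 + ∑ i ∈ Finset.Icc 1 n, s i)
    (h2 : ∀ n, r < n → s (n + 1) ≤ 2 * s n) :
    ∀ m : ℕ, 0 < m →
      ∃ I : Finset ℕ, (∀ i ∈ I, 1 ≤ i) ∧ m = ∑ i ∈ I, s i := by
  -- Step A: the bound holds for all n
  have hA : ∀ n, s (n + 1) ≤ 1 + ∑ i ∈ Finset.Icc 1 n, s i := by
    intro n
    rcases le_or_gt n r with h | h
    · exact h1 n h
    · -- strong induction from r
      have key : ∀ k, r ≤ k → s (k + 1) ≤ 1 + ∑ i ∈ Finset.Icc 1 k, s i := by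
        intro k hk
        induction k, hk using Nat.le_induction with
        | base => exact h1 r le_rfl
        | succ n hn ih =>
          have h2' := h2 (n + 1) (Nat.lt_succ_of_le hn)
          have hsum : ∑ i ∈ Finset.Icc 1 (n + 1), s i
              = (∑ i ∈ Finset.Icc 1 n, s i) + s (n + 1) :=
            Finset.sum_Icc_succ_top (Nat.one_le_iff_ne_zero.mpr (Nat.succ_ne_zero n)) s
          calc s (n + 2) ≤ 2 * s (n + 1) := h2'
            _ = s (n + 1) + s (n + 1) := by ring
            _ ≤ (1 + ∑ i ∈ Finset.Icc 1 n, s i) + s (n + 1) :=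
                Nat.add_le_add_right ih _
            _ = 1 + ∑ i ∈ Finset.Icc 1 (n + 1), s i := by rw [hsum]; ring
      exact key n h.le
  -- Step B: greedy representation
  have hB : ∀ n, ∀ m, 0 < m → m ≤ ∑ i ∈ Finset.Icc 1 n, s i →
      ∃ I : Finset ℕ, I ⊆ Finset.Icc 1 n ∧ m = ∑ i ∈ I, s i := by
    intro n
    induction n with
    | zero =>
      intro m hm hle
      simp at hle
      omega
    | succ n ih =>
      intro m hm hle
      have hsum : ∑ i ∈ Finset.Icc 1 (n + 1), s i
          = (∑ i ∈ Finset.Icc 1 n, s i) + s (n + 1) :=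
        Finset.sum_Icc_succ_top (Nat.one_le_iff_ne_zero.mpr (Nat.succ_ne_zero n)) s
      rcases le_or_gt m (∑ i ∈ Finset.Icc 1 n, s i) with hc | hc
      · obtain ⟨I, hI, hIm⟩ := ih m hm hc
        exact ⟨I, hI.trans (Finset.Icc_subset_Icc_right (Nat.le_succ _)), hIm⟩
      · have hms : s (n + 1) ≤ m := by have := hA n; omega
        rcases Nat.eq_or_lt_of_le hms with heq | hlt
        · refine ⟨{n + 1}, ?_, by simp [heq]⟩
          intro x hx
          simp at hx
          simp [hx]
        · have hm' : 0 < m - s (n + 1) := by omega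
          have hle' : m - s (n + 1) ≤ ∑ i ∈ Finset.Icc 1 n, s i := by omega
          obtain ⟨I, hI, hIm⟩ := ih (m - s (n + 1)) hm' hle'
          have hnotin : n + 1 ∉ I := by
            intro h
            have := Finset.mem_Icc.mp (hI h)
            omega
          refine ⟨insert (n + 1) I, ?_, ?_⟩
          · intro x hx
            rcases Finset.mem_insert.mp hx with h | h
            · subst h; simp
            · exact (Finset.Icc_subset_Icc_right (Nat.le_succ _)) (hI h)
          · rw [Finset.sum_insert hnotin]
            omega
  intro m hm
  have hgrow : m ≤ ∑ i ∈ Finset.Icc 1 m, s i := by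
    calc m = ∑ i ∈ Finset.Icc 1 m, 1 := by simp
      _ ≤ ∑ i ∈ Finset.Icc 1 m, s i := by
          apply Finset.sum_le_sum
          intro i hi
          exact hs i (Finset.mem_Icc.mp hi).1
  obtain ⟨I, hI, hIm⟩ := hB m m hm hgrow
  exact ⟨I, fun i hi => (Finset.mem_Icc.mp (hI hi)).1, hIm⟩
end

section
/- Let t ≥ 1 and s_n = ⌊tα^n⌋. If 1 < α < 3/2, then s_{n+1} ≤ 2s_n for all n ≥ 1. If 3/2 ≤ α < (1+√5)/2, then s_{n+1} ≤ 2s_n for all n ≥ 2. If (1+√5)/2 ≤ α < 5^(1/3), then s_{n+1} ≤ 2s_n for all n ≥ 3. -/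
/-!
Write `x = t α^n`, so that `s_{n+1} = ⌊α x⌋`. If `x ≥ k` for a natural number `k` and
`α ≤ (2k + 1)/(k + 1)`, then `α x < α (⌊x⌋ + 1) ≤ 2⌊x⌋ + 1`, i.e. `⌊α x⌋ ≤ 2⌊x⌋`.
The three ranges of `α` lie below the thresholds `3/2`, `5/3`, `9/5` for `k = 1, 2, 4`, and
`t α^n ≥ α^n` is at least `1`, `(3/2)^2 ≥ 2`, `φ^3 = 2φ + 1 ≥ 4` for `n ≥ 1, 2, 3` respectively.
-/

open Real goldenRatio

theorem Int.floor_mul_le_two_mul_floor {x α : ℝ} {k : ℕ} (hkx : (k : ℝ) ≤ x) (hα : 0 < α)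
    (hαk : α * (k + 1) ≤ 2 * k + 1) : ⌊α * x⌋ ≤ 2 * ⌊x⌋ := by
  have hk : (k : ℝ) ≤ ⌊x⌋ := by exact_mod_cast Int.le_floor.mpr hkx
  have hα2 : α ≤ 2 := by nlinarith
  have hx : x < ⌊x⌋ + 1 := Int.lt_floor_add_one x
  rw [Int.floor_le_iff]
  push_cast
  calc α * x < α * (⌊x⌋ + 1) := by gcongr
    _ = α * (k + 1) + α * (⌊x⌋ - k) := by ring
    _ ≤ 2 * k + 1 + 2 * (⌊x⌋ - k) := by gcongr
    _ = 2 * ⌊x⌋ + 1 := by ring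

theorem floor_mul_pow_succ_le_two_mul_floor {t α : ℝ} {k m n : ℕ} (ht : 1 ≤ t) (hα : 1 ≤ α)
    (hk : (k : ℝ) ≤ α ^ m) (hαk : α * (k + 1) ≤ 2 * k + 1) (hmn : m ≤ n) :
    ⌊t * α ^ (n + 1)⌋ ≤ 2 * ⌊t * α ^ n⌋ := by
  rw [show t * α ^ (n + 1) = α * (t * α ^ n) by ring]
  refine Int.floor_mul_le_two_mul_floor ?_ (by linarith) hαk
  calc (k : ℝ) ≤ α ^ m := hk
    _ ≤ α ^ n := pow_le_pow_right₀ hα hmn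
    _ ≤ t * α ^ n := le_mul_of_one_le_left (by positivity) ht

theorem goldenRatio_le_five_thirds : φ ≤ 5 / 3 := by
  have : √5 ≤ 7 / 3 := (sqrt_le_left (by norm_num)).mpr (by norm_num)
  unfold goldenRatio
  linarith

theorem four_le_goldenRatio_pow_three : 4 ≤ φ ^ 3 := by
  have : 2 ≤ √5 := (le_sqrt' (by norm_num)).mpr (by norm_num)
  calc (4 : ℝ) ≤ 2 * φ + 1 := by unfold goldenRatio; linarith
    _ = φ ^ 3 := by linear_combination (-φ - 1) * goldenRatio_sq

theorem five_rpow_one_third_le : (5 : ℝ) ^ ((1 : ℝ) / 3) ≤ 9 / 5 := by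
  have h : ((5 : ℝ) ^ ((1 : ℝ) / 3)) ^ 3 = 5 := by
    rw [← rpow_natCast, ← rpow_mul (by norm_num)]
    norm_num
  refine le_of_pow_le_pow_left₀ three_ne_zero (by norm_num) ?_
  rw [h]
  norm_num

theorem stmt_5 (t α : ℝ) (ht : 1 ≤ t) (hα : 1 < α) :
    ((α < 3 / 2 → ∀ n : ℕ, 1 ≤ n → ⌊t * α ^ (n + 1)⌋ ≤ 2 * ⌊t * α ^ n⌋) ∧
     (3 / 2 ≤ α → α < (1 + Real.sqrt 5) / 2 →
        ∀ n : ℕ, 2 ≤ n → ⌊t * α ^ (n + 1)⌋ ≤ 2 * ⌊t * α ^ n⌋) ∧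
     ((1 + Real.sqrt 5) / 2 ≤ α → α < (5 : ℝ) ^ ((1 : ℝ) / 3) →
        ∀ n : ℕ, 3 ≤ n → ⌊t * α ^ (n + 1)⌋ ≤ 2 * ⌊t * α ^ n⌋)) := by
  refine ⟨fun hα₁ n hn => ?_, fun hα₁ hα₂ n hn => ?_, fun hα₁ hα₂ n hn => ?_⟩
  · exact floor_mul_pow_succ_le_two_mul_floor (k := 1) ht hα.le (by norm_num; linarith)
      (by norm_num; linarith) hn
  · refine floor_mul_pow_succ_le_two_mul_floor (k := 2) ht (by linarith) ?_ ?_ hn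
    · norm_num; nlinarith
    · have : (1 + √5) / 2 ≤ 5 / 3 := goldenRatio_le_five_thirds
      push_cast; linarith
  · refine floor_mul_pow_succ_le_two_mul_floor (k := 4) ht (by linarith) ?_ ?_ hn
    · calc ((4 : ℕ) : ℝ) ≤ φ ^ 3 := by exact_mod_cast four_le_goldenRatio_pow_three
        _ ≤ α ^ 3 := by gcongr
    · have := five_rpow_one_third_le; push_cast; linarith
end

section
/- Let t ≥ 1 and 1 < α < (1+√5)/2, with s_n = ⌊tα^n⌋. Suppose there exist positive integers r and X such that every integer m with X ≤ m < X + s_{r+1} is a sum of distinct elements of {s_1, ..., s_r}. Then the sequence (s_n) is complete, i.e., every sufficiently large integer is a sum of distinct elements of the sequence. -/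
theorem stmt_6 (t α : ℝ) (ht : 1 ≤ t) (hα1 : 1 < α)
    (hα2 : α < (1 + Real.sqrt 5) / 2)
    (r X : ℕ) (hr : 0 < r) (hX : 0 < X)
    (h : ∀ m : ℤ, (X : ℤ) ≤ m → m < (X : ℤ) + ⌊t * α ^ (r + 1)⌋ →
      ∃ I : Finset ℕ, I ⊆ Finset.Icc 1 r ∧ m = ∑ i ∈ I, ⌊t * α ^ i⌋) :
    ∃ N : ℕ, ∀ m : ℕ, N ≤ m →
      ∃ I : Finset ℕ, (∀ i ∈ I, 1 ≤ i) ∧ (m : ℤ) = ∑ i ∈ I, ⌊t * α ^ i⌋ := by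
  have hα0 : (0 : ℝ) < α := by linarith
  have ht0 : (0 : ℝ) < t := by linarith
  set s : ℕ → ℤ := fun i => ⌊t * α ^ i⌋ with hs
  -- positivity of s
  have hspos : ∀ k : ℕ, 1 ≤ s k := by
    intro k
    have h1 : (1 : ℝ) ≤ α ^ k := one_le_pow₀ hα1.le
    have h2 : (1 : ℝ) ≤ t * α ^ k := by nlinarith
    exact Int.le_floor.2 (by exact_mod_cast h2)
  -- key doubling inequality
  have hA : ∀ n : ℕ, 2 ≤ n → s (n + 1) ≤ 2 * s n := by
    intro n hn
    have hb0 : (0 : ℝ) < t * α ^ n := by positivity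
    have hbfl : 1 ≤ s n := hspos n
    have hblt : t * α ^ n < (s n : ℝ) + 1 := Int.lt_floor_add_one _
    rcases eq_or_lt_of_le hbfl with h1 | h2
    · -- s n = 1, so t*α^n < 2
      have hb2 : t * α ^ n < 2 := by rw [← h1] at hblt; push_cast at hblt; linarith
      have hαn : α ^ 2 ≤ α ^ n := pow_le_pow_right₀ hα1.le hn
      have htα : α ^ n ≤ t * α ^ n := le_mul_of_one_le_left (by positivity) ht
      have hα2' : α ^ 2 < 2 := by linarith
      have hα32 : α < 3 / 2 := by nlinarith
      have h3 : t * α ^ (n + 1) < 3 := by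
        have : t * α ^ (n + 1) = (t * α ^ n) * α := by ring
        rw [this]
        nlinarith
      have hfl : s (n + 1) < 3 := Int.floor_lt.2 (by exact_mod_cast h3)
      omega
    · -- s n ≥ 2
      have hk2 : (2 : ℤ) ≤ s n := h2
      have hsqrt5 : Real.sqrt 5 < 9 / 4 := by
        rw [show (9 : ℝ) / 4 = Real.sqrt ((9 / 4) ^ 2) by
          rw [Real.sqrt_sq (by norm_num)]]
        exact Real.sqrt_lt_sqrt (by norm_num) (by norm_num)
      have hφ : α < 13 / 8 := by linarith
      have hb1 : t * α ^ n < (s n : ℝ) + 1 := hblt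
      have hk2' : (2 : ℝ) ≤ (s n : ℝ) := by exact_mod_cast hk2
      have h3 : t * α ^ (n + 1) < 2 * (s n : ℝ) + 1 := by
        have heq : t * α ^ (n + 1) = (t * α ^ n) * α := by ring
        rw [heq]
        nlinarith
      have hfl : s (n + 1) < 2 * s n + 1 := Int.floor_lt.2 (by push_cast; linarith)
      omega
  -- interval lengths
  set L : ℕ → ℤ := fun n => s (r + 1) + ∑ k ∈ Finset.Ioc r n, s k with hLdef
  have hLstep : ∀ n : ℕ, r ≤ n → L (n + 1) = L n + s (n + 1) := by
    intro n hn
    simp only [hLdef]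
    rw [Finset.sum_Ioc_succ_top hn]
    ring
  have hLr : L r = s (r + 1) := by simp [hLdef]
  have hL : ∀ n : ℕ, r ≤ n → s (n + 1) ≤ L n := by
    intro n hn
    induction n, hn using Nat.le_induction with
    | base => rw [hLr]
    | succ n hn ih =>
      have h1 := hA (n + 1) (by omega)
      have h2 : L (n + 1) = L n + s (n + 1) := hLstep n hn
      omega
  -- main induction: every m in [X, X + L n) is representable by Icc 1 n
  have key : ∀ n : ℕ, r ≤ n → ∀ m : ℤ, (X : ℤ) ≤ m → m < (X : ℤ) + L n →
      ∃ I : Finset ℕ, I ⊆ Finset.Icc 1 n ∧ m = ∑ i ∈ I, s i := by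
    intro n hn
    induction n, hn using Nat.le_induction with
    | base =>
      intro m h1 h2
      rw [hLr] at h2
      exact h m h1 h2
    | succ n hn ih =>
      intro m h1 h2
      rw [hLstep n hn] at h2
      by_cases hc : m < (X : ℤ) + L n
      · obtain ⟨I, hI, hm⟩ := ih m h1 hc
        exact ⟨I, hI.trans (Finset.Icc_subset_Icc_right (by omega)), hm⟩
      · push_neg at hc
        have hsL := hL n hn
        obtain ⟨I, hI, hm⟩ := ih (m - s (n + 1)) (by omega) (by omega)
        have hnotmem : (n + 1) ∉ I := by
          intro hmem
          have := Finset.mem_Icc.1 (hI hmem)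
          omega
        refine ⟨insert (n + 1) I, ?_, ?_⟩
        · intro i hi
          rcases Finset.mem_insert.1 hi with hh | hh
          · rw [hh]; exact Finset.mem_Icc.2 ⟨by omega, le_refl _⟩
          · exact Finset.Icc_subset_Icc_right (by omega) (hI hh)
        · rw [Finset.sum_insert hnotmem]
          omega
  -- L grows without bound
  have hgrow : ∀ n : ℕ, r ≤ n → (n : ℤ) - r + 1 ≤ L n := by
    intro n hn
    induction n, hn using Nat.le_induction with
    | base => rw [hLr]; have := hspos (r + 1); omega
    | succ n hn ih =>
      have h2 : L (n + 1) = L n + s (n + 1) := hLstep n hn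
      have := hspos (n + 1)
      push_cast
      push_cast at ih
      omega
  refine ⟨X, ?_⟩
  intro m hm
  have h1 : (X : ℤ) ≤ (m : ℤ) := by exact_mod_cast hm
  have hX1 : (1 : ℤ) ≤ (X : ℤ) := by exact_mod_cast hX
  have h2 : (m : ℤ) < (X : ℤ) + L (r + m) := by
    have := hgrow (r + m) (by omega)
    push_cast at this
    omega
  obtain ⟨I, hI, hm'⟩ := key (r + m) (by omega) m h1 h2
  exact ⟨I, fun i hi => (Finset.mem_Icc.1 (hI hi)).1, hm'⟩
end

section
/- If α = 2 and t ≥ 1, then the sequence s_n = ⌊t·2^n⌋ is not complete: infinitely many positive integers fail to be sums of distinct elements of the sequence. -/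
theorem stmt_9 (t : ℝ) (ht : 1 ≤ t) :
    {m : ℕ | 0 < m ∧
      ¬ ∃ I : Finset ℕ, (∀ i ∈ I, 1 ≤ i) ∧
        (m : ℤ) = ∑ i ∈ I, ⌊t * (2 : ℝ) ^ i⌋}.Infinite := by
  have hpos : ∀ i : ℕ, (1:ℤ) ≤ ⌊t * 2 ^ i⌋ := by
    intro i
    rw [Int.le_floor]
    have h2 : (1:ℝ) ≤ 2 ^ i := one_le_pow₀ (by norm_num)
    push_cast
    nlinarith
  set S : ℕ → ℤ := fun n => ∑ i ∈ Finset.Icc 1 n, ⌊t * 2 ^ i⌋ with hS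
  have hSsucc : ∀ n, S (n+1) = S n + ⌊t * 2 ^ (n+1)⌋ := by
    intro n
    simp only [hS]
    rw [Finset.sum_Icc_succ_top (by omega)]
  have hgeom : ∀ n : ℕ, ∑ i ∈ Finset.Icc 1 n, (2:ℝ) ^ i = 2 ^ (n+1) - 2 := by
    intro n
    induction n with
    | zero => simp
    | succ k ih =>
        rw [Finset.sum_Icc_succ_top (by omega), ih]
        ring
  have hSle : ∀ n, (S n : ℝ) ≤ t * 2 ^ (n+1) - 2 * t := by
    intro n
    have h1 : (S n : ℝ) ≤ ∑ i ∈ Finset.Icc 1 n, t * 2 ^ i := by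
      rw [hS]
      push_cast
      exact Finset.sum_le_sum fun i _ => Int.floor_le _
    have h2 : ∑ i ∈ Finset.Icc 1 n, t * (2:ℝ) ^ i = t * (2 ^ (n+1) - 2) := by
      rw [← Finset.mul_sum, hgeom]
    nlinarith
  have hkey : ∀ n, S n + 2 ≤ ⌊t * 2 ^ (n+1)⌋ := by
    intro n
    have h1 : t * 2 ^ (n+1) - 1 < (⌊t * 2 ^ (n+1)⌋ : ℝ) := Int.sub_one_lt_floor _
    have h2 := hSle n
    have h3 : ((S n : ℤ) : ℝ) + 1 < (⌊t * 2 ^ (n+1)⌋ : ℝ) := by nlinarith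
    have h4 : S n + 1 < ⌊t * 2 ^ (n+1)⌋ := by exact_mod_cast h3
    omega
  have hSnonneg : ∀ n, 0 ≤ S n := by
    intro n
    apply Finset.sum_nonneg
    intro i _
    linarith [hpos i]
  have hSmono : StrictMono S := by
    apply strictMono_nat_of_lt_succ
    intro n
    rw [hSsucc]
    linarith [hpos (n+1)]
  have hmono : ∀ m j : ℕ, m ≤ j → ⌊t * 2 ^ m⌋ ≤ ⌊t * 2 ^ j⌋ := by
    intro m j hmj
    apply Int.floor_le_floor
    have : (2:ℝ) ^ m ≤ 2 ^ j := pow_le_pow_right₀ (by norm_num) hmj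
    nlinarith
  apply Set.infinite_of_injective_forall_mem
    (f := fun n : ℕ => (S (n+1)).toNat + 1)
  · intro a b hab
    simp only [add_left_inj] at hab
    have : S (a+1) = S (b+1) := by
      have ha := hSnonneg (a+1)
      have hb := hSnonneg (b+1)
      omega
    have := hSmono.injective this
    omega
  · intro n
    simp only [Set.mem_setOf_eq]
    constructor
    · omega
    · rintro ⟨I, hI1, hIsum⟩
      have hm : (((S (n+1)).toNat + 1 : ℕ) : ℤ) = S (n+1) + 1 := by
        have := hSnonneg (n+1)
        push_cast
        omega
      rw [hm] at hIsum
      by_cases hc : ∀ i ∈ I, i ≤ n + 1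
      · have hsub : I ⊆ Finset.Icc 1 (n+1) := by
          intro i hi
          simp only [Finset.mem_Icc]
          exact ⟨hI1 i hi, hc i hi⟩
        have : ∑ i ∈ I, ⌊t * 2 ^ i⌋ ≤ S (n+1) := by
          apply Finset.sum_le_sum_of_subset_of_nonneg hsub
          intro i _ _
          linarith [hpos i]
        omega
      · push_neg at hc
        obtain ⟨j, hjI, hj⟩ := hc
        have h1 : ⌊t * 2 ^ j⌋ ≤ ∑ i ∈ I, ⌊t * 2 ^ i⌋ := by
          apply Finset.single_le_sum (fun i _ => by linarith [hpos i]) hjI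
        have h2 : ⌊t * 2 ^ (n+2)⌋ ≤ ⌊t * 2 ^ j⌋ := hmono (n+2) j (by omega)
        have h3 : S (n+1) + 2 ≤ ⌊t * 2 ^ (n+2)⌋ := hkey (n+1)
        omega
end

section
/- If α = 2, 0 < t < 1, and t is not of the form 1/2^k for any integer k ≥ 1, then the sequence s_n = ⌊t·2^n⌋ is not complete. -/
theorem stmt_11 (t : ℝ) (ht0 : 0 < t) (ht1 : t < 1)
    (ht2 : ∀ k : ℕ, 1 ≤ k → t ≠ 1 / 2 ^ k) :
    ¬ ∃ N : ℕ, ∀ m : ℕ, N ≤ m →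
      ∃ I : Finset ℕ, (∀ i ∈ I, 1 ≤ i) ∧
        (m : ℤ) = ∑ i ∈ I, ⌊t * (2 : ℝ) ^ i⌋ := by
  -- basic facts about s i = ⌊t * 2^i⌋
  have hs0 : ∀ i : ℕ, 0 ≤ ⌊t * (2:ℝ)^i⌋ := fun i => Int.floor_nonneg.2 (by positivity)
  have hsmono : ∀ ⦃i k : ℕ⦄, i ≤ k → ⌊t * (2:ℝ)^i⌋ ≤ ⌊t * (2:ℝ)^k⌋ := by
    intro i k hik
    apply Int.floor_le_floor
    have h2 : (2:ℝ)^i ≤ (2:ℝ)^k := pow_le_pow_right₀ (by norm_num) hik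
    nlinarith
  have hdouble : ∀ i : ℕ, 2 * ⌊t * (2:ℝ)^i⌋ ≤ ⌊t * (2:ℝ)^(i+1)⌋ := by
    intro i
    rw [Int.le_floor]
    push_cast
    have h1 : (⌊t * (2:ℝ)^i⌋ : ℝ) ≤ t * 2^i := Int.floor_le _
    have h2 : (2:ℝ)^(i+1) = 2 * 2^i := by ring
    nlinarith
  -- existence of an index with floor ≥ 1
  have hex : ∃ i : ℕ, 1 ≤ ⌊t * (2:ℝ)^i⌋ := by
    obtain ⟨n, hn⟩ := pow_unbounded_of_one_lt (1/t) (by norm_num : (1:ℝ) < 2)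
    refine ⟨n, Int.le_floor.2 ?_⟩
    push_cast
    rw [div_lt_iff₀ ht0] at hn
    nlinarith
  classical
  let j := Nat.find hex
  have hjspec : 1 ≤ ⌊t * (2:ℝ)^j⌋ := Nat.find_spec hex
  have hj0 : j ≠ 0 := by
    intro h
    have : ⌊t * (2:ℝ)^j⌋ = 0 := by
      rw [h]
      simp only [pow_zero, mul_one]
      exact Int.floor_eq_zero_iff.2 ⟨le_of_lt ht0, ht1⟩
    omega
  have hj1 : 1 ≤ j := Nat.one_le_iff_ne_zero.2 hj0
  obtain ⟨j', hj'⟩ : ∃ j', j = j' + 1 := ⟨j - 1, by omega⟩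
  have hprev : ⌊t * (2:ℝ)^j'⌋ = 0 := by
    have h := Nat.find_min hex (m := j') (by omega)
    have := hs0 j'
    omega
  have hprevlt : t * (2:ℝ)^j' < 1 := by
    have := (Int.floor_eq_zero_iff.1 hprev).2
    simpa using this
  have hsj : ⌊t * (2:ℝ)^j⌋ = 1 := by
    have hlt : ⌊t * (2:ℝ)^j⌋ < 2 := by
      rw [Int.floor_lt]
      push_cast
      rw [hj', pow_succ]
      nlinarith
    omega
  -- t * 2^j > 1 strictly
  have htj : 1 < t * (2:ℝ)^j := by
    rcases lt_or_eq_of_le (by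
      have := Int.le_floor.1 (le_of_eq hsj.symm)
      simpa using this : (1:ℝ) ≤ t * 2^j) with h | h
    · exact h
    · exfalso
      apply ht2 j hj1
      field_simp at h ⊢
      linarith
  -- small indices vanish
  have hzero : ∀ i < j, ⌊t * (2:ℝ)^i⌋ = 0 := by
    intro i hi
    have h := Nat.find_min hex hi
    have := hs0 i
    omega
  -- eventually s (j+k) exceeds 2^k
  have hbig : ∃ k : ℕ, (2:ℤ)^k + 1 ≤ ⌊t * (2:ℝ)^(j+k)⌋ := by
    obtain ⟨k, hk⟩ := pow_unbounded_of_one_lt (1/(t * 2^j - 1)) (by norm_num : (1:ℝ) < 2)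
    refine ⟨k, Int.le_floor.2 ?_⟩
    push_cast
    rw [div_lt_iff₀ (by linarith)] at hk
    have h2 : (2:ℝ)^(j+k) = 2^j * 2^k := pow_add 2 j k
    nlinarith
  -- exists n ≥ j with a "digit": 2 * s n + 1 ≤ s (n+1)
  have hdigit : ∃ n : ℕ, j ≤ n ∧ 2 * ⌊t * (2:ℝ)^n⌋ + 1 ≤ ⌊t * (2:ℝ)^(n+1)⌋ := by
    by_contra hcon
    push_neg at hcon
    have heq : ∀ k : ℕ, ⌊t * (2:ℝ)^(j+k)⌋ = 2^k := by
      intro k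
      induction k with
      | zero => simpa using hsj
      | succ k ih =>
        have h1 := hdouble (j+k)
        have h2 := hcon (j+k) (by omega)
        have h3 : j + (k+1) = (j+k) + 1 := by omega
        have h4 : (2:ℤ)^(k+1) = 2^k * 2 := pow_succ 2 k
        rw [h3]
        omega
    obtain ⟨k, hk⟩ := hbig
    rw [heq k] at hk
    omega
  obtain ⟨n₀, hn₀j, hn₀⟩ := hdigit
  -- invariant: for n ≥ j, sum over Icc 1 n ≤ 2 * s n - 1
  have hQ : ∀ n : ℕ, j ≤ n → (∑ i ∈ Finset.Icc 1 n, ⌊t * (2:ℝ)^i⌋) ≤ 2 * ⌊t * (2:ℝ)^n⌋ - 1 := by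
    intro n hn
    induction n, hn using Nat.le_induction with
    | base =>
      have hsum : (∑ i ∈ Finset.Icc 1 j, ⌊t * (2:ℝ)^i⌋) = 1 := by
        rw [Finset.sum_eq_single j]
        · exact hsj
        · intro i hi hne
          exact hzero i (lt_of_le_of_ne (Finset.mem_Icc.1 hi).2 hne)
        · intro h
          exact absurd (Finset.mem_Icc.2 ⟨hj1, le_refl j⟩) h
      rw [hsum, hsj]
      norm_num
    | succ n hn ih =>
      rw [Finset.sum_Icc_succ_top (by omega : 1 ≤ n + 1)]
      have h1 := hdouble n
      have h2 := hsmono (Nat.le_succ n)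
      omega
  -- the gap: for m ≥ n₀, sum over Icc 1 m + 2 ≤ s (m+1)
  have hgap : ∀ m : ℕ, n₀ ≤ m → (∑ i ∈ Finset.Icc 1 m, ⌊t * (2:ℝ)^i⌋) + 2 ≤ ⌊t * (2:ℝ)^(m+1)⌋ := by
    intro m hm
    induction m, hm using Nat.le_induction with
    | base =>
      have := hQ n₀ hn₀j
      omega
    | succ m hm ih =>
      rw [Finset.sum_Icc_succ_top (by omega : 1 ≤ m + 1)]
      have h1 := hdouble (m+1)
      omega
  -- finish
  rintro ⟨N, hN⟩
  -- choose M ≥ n₀ with s (M+1) ≥ N + 2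
  obtain ⟨K, hK⟩ := pow_unbounded_of_one_lt ((N + 2 : ℝ)/t) (by norm_num : (1:ℝ) < 2)
  have hKbig : (N:ℤ) + 2 ≤ ⌊t * (2:ℝ)^K⌋ := by
    rw [Int.le_floor]
    push_cast
    rw [div_lt_iff₀ ht0] at hK
    nlinarith
  set M := max n₀ K with hM
  have hMn₀ : n₀ ≤ M := le_max_left _ _
  have hMs : (N:ℤ) + 2 ≤ ⌊t * (2:ℝ)^(M+1)⌋ :=
    le_trans hKbig (hsmono (le_trans (le_max_right n₀ K) (Nat.le_succ M)))
  set m : ℕ := (⌊t * (2:ℝ)^(M+1)⌋ - 1).toNat with hm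
  have hmz : (m:ℤ) = ⌊t * (2:ℝ)^(M+1)⌋ - 1 := Int.toNat_of_nonneg (by omega)
  have hmN : N ≤ m := by omega
  obtain ⟨I, hI1, hIsum⟩ := hN m hmN
  rw [hmz] at hIsum
  by_cases hall : ∀ i ∈ I, i ≤ M
  · -- sum over I ≤ sum over Icc 1 M ≤ s(M+1) - 2 < m
    have hsub : I ⊆ Finset.Icc 1 M := by
      intro i hi
      exact Finset.mem_Icc.2 ⟨hI1 i hi, hall i hi⟩
    have h1 : (∑ i ∈ I, ⌊t * (2:ℝ)^i⌋) ≤ ∑ i ∈ Finset.Icc 1 M, ⌊t * (2:ℝ)^i⌋ :=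
      Finset.sum_le_sum_of_subset_of_nonneg hsub (fun i _ _ => hs0 i)
    have h2 := hgap M hMn₀
    omega
  · push_neg at hall
    obtain ⟨i₀, hi₀I, hi₀⟩ := hall
    have h1 : ⌊t * (2:ℝ)^i₀⌋ ≤ ∑ i ∈ I, ⌊t * (2:ℝ)^i⌋ :=
      Finset.single_le_sum (fun i _ => hs0 i) hi₀I
    have h2 : ⌊t * (2:ℝ)^(M+1)⌋ ≤ ⌊t * (2:ℝ)^i₀⌋ := hsmono (by omega)
    omega
end

section
/- If 5^(1/3) ≤ α < 2 and t ≥ 1, then the sequence s_n = ⌊tα^n⌋ is not complete. -/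
section Stmt12Aux

variable {t α : ℝ}

private lemma stmt12_mono (ht : 0 ≤ t) (hα : 1 ≤ α) {i j : ℕ} (hij : i ≤ j) :
    ⌊t * α ^ i⌋ ≤ ⌊t * α ^ j⌋ := by
  apply Int.floor_le_floor
  have h := pow_le_pow_right₀ hα hij
  nlinarith

private lemma stmt12_pos (ht : 1 ≤ t) (hα : 1 ≤ α) {i : ℕ} (hi : 1 ≤ i) :
    (1 : ℤ) ≤ ⌊t * α ^ i⌋ := by
  rw [Int.le_floor]
  have h1 : (1:ℝ) ≤ α ^ i := one_le_pow₀ hα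
  push_cast
  nlinarith

private lemma stmt12_superadd (ht : 1 ≤ t) (h17 : (1.7:ℝ) < α) (m : ℕ) :
    ⌊t * α ^ m⌋ + ⌊t * α ^ (m+1)⌋ ≤ ⌊t * α ^ (m+2)⌋ := by
  have h0 : (0:ℝ) < α := by linarith
  have hp : (0:ℝ) < α ^ m := pow_pos h0 m
  have hq : (0:ℝ) < α * α - α - 1 := by nlinarith
  have key : t * α ^ m + t * α ^ (m+1) ≤ t * α ^ (m+2) := by
    rw [pow_succ, pow_succ, pow_succ]
    nlinarith [mul_nonneg (mul_nonneg (by linarith : (0:ℝ) ≤ t) hp.le) hq.le]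
  calc (⌊t * α ^ m⌋ + ⌊t * α ^ (m+1)⌋ : ℤ) ≤ ⌊t * α ^ m + t * α ^ (m+1)⌋ := by
        rw [Int.le_floor]
        push_cast
        have h1 := Int.floor_le (t * α ^ m)
        have h2 := Int.floor_le (t * α ^ (m+1))
        linarith
    _ ≤ ⌊t * α ^ (m+2)⌋ := Int.floor_le_floor key

private lemma stmt12_mem_le (ht : 1 ≤ t) (hα : 1 ≤ α) {I : Finset ℕ}
    (hI : ∀ i ∈ I, 1 ≤ i) {v : ℤ} (hs : v = ∑ i ∈ I, ⌊t * α ^ i⌋)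
    {k : ℕ} (hv : v < ⌊t * α ^ (k+1)⌋) : ∀ j ∈ I, j ≤ k := by
  intro j hj
  by_contra hc
  push_neg at hc
  have h1 : ⌊t * α ^ (k+1)⌋ ≤ ⌊t * α ^ j⌋ := stmt12_mono (by linarith) hα hc
  have h2 : ⌊t * α ^ j⌋ ≤ ∑ i ∈ I, ⌊t * α ^ i⌋ :=
    Finset.single_le_sum (f := fun i => ⌊t * α ^ i⌋)
      (fun i hi => le_trans zero_le_one (stmt12_pos ht hα (hI i hi))) hj
  linarith

end Stmt12Aux

theorem stmt_12 (t α : ℝ) (ht : 1 ≤ t)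
    (hα1 : (5 : ℝ) ^ ((1 : ℝ) / 3) ≤ α) (hα2 : α < 2) :
    ¬ ∃ N : ℕ, ∀ m : ℕ, N ≤ m →
      ∃ I : Finset ℕ, (∀ i ∈ I, 1 ≤ i) ∧
        (m : ℤ) = ∑ i ∈ I, ⌊t * α ^ i⌋ := by
  -- basic consequences of the hypotheses
  have h5nn : (0:ℝ) ≤ 5 := by norm_num
  have hr : ((5:ℝ) ^ ((1:ℝ)/3)) ^ (3:ℕ) = 5 := by
    rw [← Real.rpow_natCast ((5:ℝ) ^ ((1:ℝ)/3)) 3, ← Real.rpow_mul h5nn]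
    norm_num
  have hα3 : (5:ℝ) ≤ α ^ 3 := by
    calc (5:ℝ) = ((5:ℝ) ^ ((1:ℝ)/3)) ^ (3:ℕ) := hr.symm
      _ ≤ α ^ 3 := pow_le_pow_left₀ (Real.rpow_nonneg h5nn _) hα1 3
  have hα0 : (0:ℝ) < α := by nlinarith [sq_nonneg α, sq_nonneg (α - 1), sq_nonneg (α + 1)]
  have h17 : (1.7:ℝ) < α := by nlinarith [sq_nonneg (α - 1.7), sq_nonneg (α + 1.7), hα0.le]
  have hα' : (1:ℝ) ≤ α := by linarith
  have ht0 : (0:ℝ) ≤ t := by linarith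
  have hta3 : (5:ℝ) ≤ t * α ^ 3 := by nlinarith [hα3, ht]
  -- integer floor facts
  have hL6 : (5:ℤ) ≤ ⌊t * α ^ 3⌋ := by
    rw [Int.le_floor]; push_cast; linarith
  have hL7 : (8:ℤ) ≤ ⌊t * α ^ 4⌋ := by
    rw [Int.le_floor]
    push_cast
    have h4 : t * α ^ 4 = (t * α ^ 3) * α := by ring
    nlinarith [mul_le_mul_of_nonneg_right hta3 (by linarith : (0:ℝ) ≤ α)]
  have hL4 : ⌊t * α ^ 3⌋ + 2 ≤ ⌊t * α ^ 4⌋ := by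
    rw [Int.le_floor]
    push_cast
    have h3 := Int.floor_le (t * α ^ 3)
    have h4 : t * α ^ 4 = (t * α ^ 3) * α := by ring
    nlinarith [mul_le_mul_of_nonneg_right hta3 (by linarith : (0:ℝ) ≤ α - 1)]
  rintro ⟨N, hN⟩
  -- the invariant step
  have step : ∀ k : ℕ,
      (∃ v : ℤ, (¬ ∃ I : Finset ℕ, (∀ i ∈ I, 1 ≤ i) ∧ v = ∑ i ∈ I, ⌊t * α ^ i⌋) ∧
        (∑ i ∈ Finset.Icc 1 k, ⌊t * α ^ i⌋) < v ∧ v < ⌊t * α ^ (k+2)⌋) →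
      (∃ v : ℤ, (¬ ∃ I : Finset ℕ, (∀ i ∈ I, 1 ≤ i) ∧ v = ∑ i ∈ I, ⌊t * α ^ i⌋) ∧
        (∑ i ∈ Finset.Icc 1 (k+2), ⌊t * α ^ i⌋) < v ∧ v < ⌊t * α ^ (k+2+2)⌋) := by
    rintro k ⟨v, hvR, hlo, hhi⟩
    have hsup1 : ⌊t * α ^ (k+1)⌋ + ⌊t * α ^ (k+2)⌋ ≤ ⌊t * α ^ (k+3)⌋ :=
      stmt12_superadd ht h17 (k+1)
    have hsup2 : ⌊t * α ^ (k+2)⌋ + ⌊t * α ^ (k+3)⌋ ≤ ⌊t * α ^ (k+4)⌋ :=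
      stmt12_superadd ht h17 (k+2)
    rw [show k+2+2 = k+4 from rfl]
    have hS : ∑ i ∈ Finset.Icc 1 (k+2), ⌊t * α ^ i⌋
        = (∑ i ∈ Finset.Icc 1 k, ⌊t * α ^ i⌋) + ⌊t * α ^ (k+1)⌋ + ⌊t * α ^ (k+2)⌋ := by
      rw [show k+2 = (k+1)+1 from rfl, Finset.sum_Icc_succ_top (by omega : (1:ℕ) ≤ (k+1)+1),
        Finset.sum_Icc_succ_top (by omega : (1:ℕ) ≤ k+1)]
    refine ⟨v + ⌊t * α ^ (k+3)⌋, ?_, ?_, ?_⟩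
    · rintro ⟨I, hI1, hIs⟩
      have hb : v + ⌊t * α ^ (k+3)⌋ < ⌊t * α ^ (k+4)⌋ := by linarith
      have hmem : ∀ j ∈ I, j ≤ k+3 := stmt12_mem_le ht hα' hI1 hIs hb
      by_cases hm : k+3 ∈ I
      · apply hvR
        refine ⟨I.erase (k+3), fun i hi => hI1 i (Finset.mem_of_mem_erase hi), ?_⟩
        have hsum := Finset.add_sum_erase I (fun i => ⌊t * α ^ i⌋) hm
        linarith
      · have hsub : I ⊆ Finset.Icc 1 (k+2) := by
          intro i hi
          rw [Finset.mem_Icc]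
          have h1 := hI1 i hi
          have h2 := hmem i hi
          have h3 : i ≠ k+3 := fun h => hm (h ▸ hi)
          omega
        have hle : ∑ i ∈ I, ⌊t * α ^ i⌋ ≤ ∑ i ∈ Finset.Icc 1 (k+2), ⌊t * α ^ i⌋ :=
          Finset.sum_le_sum_of_subset_of_nonneg hsub
            (fun i hi _ => le_trans zero_le_one (stmt12_pos ht hα' (Finset.mem_Icc.mp hi).1))
        rw [hS] at hle
        linarith
    · rw [hS]; linarith
    · linarith
  -- the base case : P 2
  have hS2 : ∑ i ∈ Finset.Icc 1 2, ⌊t * α ^ i⌋ = ⌊t * α ^ 1⌋ + ⌊t * α ^ 2⌋ := by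
    rw [show (2:ℕ) = 1 + 1 from rfl, Finset.sum_Icc_succ_top (by omega : (1:ℕ) ≤ 1 + 1),
      Finset.Icc_self, Finset.sum_singleton]
  have hsup0 : ⌊t * α ^ 1⌋ + ⌊t * α ^ 2⌋ ≤ ⌊t * α ^ 3⌋ := stmt12_superadd ht h17 1
  have hs1pos := stmt12_pos ht hα' (le_refl 1)
  have base : ∃ v : ℤ, (¬ ∃ I : Finset ℕ, (∀ i ∈ I, 1 ≤ i) ∧ v = ∑ i ∈ I, ⌊t * α ^ i⌋) ∧
      (∑ i ∈ Finset.Icc 1 2, ⌊t * α ^ i⌋) < v ∧ v < ⌊t * α ^ (2+2)⌋ := by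
    rw [hS2, show (2:ℕ)+2 = 4 from rfl]
    by_cases hc1 : (2:ℤ) ≤ ⌊t * α ^ 1⌋
    · -- case A : s1 ≥ 2, take v = s3 + 1
      refine ⟨⌊t * α ^ 3⌋ + 1, ?_, by linarith, by linarith⟩
      rintro ⟨I, hI1, hIs⟩
      have hb : ⌊t * α ^ 3⌋ + 1 < ⌊t * α ^ (3+1)⌋ := by linarith
      have hmem : ∀ j ∈ I, j ≤ 3 := stmt12_mem_le ht hα' hI1 hIs hb
      by_cases hm : 3 ∈ I
      · have hsum := Finset.add_sum_erase I (fun i => ⌊t * α ^ i⌋) hm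
        have hrest : ∑ i ∈ I.erase 3, ⌊t * α ^ i⌋ = 1 := by linarith
        rcases Finset.eq_empty_or_nonempty (I.erase 3) with he | ⟨j, hj⟩
        · rw [he, Finset.sum_empty] at hrest; exact absurd hrest (by norm_num)
        · have hj1 : 1 ≤ j := hI1 j (Finset.mem_of_mem_erase hj)
          have h1 : ⌊t * α ^ 1⌋ ≤ ⌊t * α ^ j⌋ := stmt12_mono ht0 hα' hj1
          have h2 : ⌊t * α ^ j⌋ ≤ ∑ i ∈ I.erase 3, ⌊t * α ^ i⌋ :=
            Finset.single_le_sum (f := fun i => ⌊t * α ^ i⌋)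
              (fun i hi => le_trans zero_le_one
                (stmt12_pos ht hα' (hI1 i (Finset.mem_of_mem_erase hi)))) hj
          linarith
      · have hsub : I ⊆ Finset.Icc 1 2 := by
          intro i hi
          rw [Finset.mem_Icc]
          have h1 := hI1 i hi
          have h2 := hmem i hi
          have h3 : i ≠ 3 := fun h => hm (h ▸ hi)
          omega
        have hle : ∑ i ∈ I, ⌊t * α ^ i⌋ ≤ ∑ i ∈ Finset.Icc 1 2, ⌊t * α ^ i⌋ :=
          Finset.sum_le_sum_of_subset_of_nonneg hsub
            (fun i hi _ => le_trans zero_le_one (stmt12_pos ht hα' (Finset.mem_Icc.mp hi).1))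
        rw [hS2] at hle
        linarith
    · -- case B : s1 = 1
      push_neg at hc1
      have hs1 : ⌊t * α ^ 1⌋ = 1 := le_antisymm (by omega) hs1pos
      by_cases hc2 : ⌊t * α ^ 1⌋ + ⌊t * α ^ 2⌋ + 2 ≤ ⌊t * α ^ 3⌋
      · -- case B1 : gap at k = 2, take v = s1 + s2 + 1
        refine ⟨⌊t * α ^ 1⌋ + ⌊t * α ^ 2⌋ + 1, ?_, by linarith, ?_⟩
        · rintro ⟨I, hI1, hIs⟩
          have hb : ⌊t * α ^ 1⌋ + ⌊t * α ^ 2⌋ + 1 < ⌊t * α ^ (2+1)⌋ := by linarith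
          have hmem : ∀ j ∈ I, j ≤ 2 := stmt12_mem_le ht hα' hI1 hIs hb
          have hsub : I ⊆ Finset.Icc 1 2 := by
            intro i hi
            rw [Finset.mem_Icc]
            exact ⟨hI1 i hi, hmem i hi⟩
          have hle : ∑ i ∈ I, ⌊t * α ^ i⌋ ≤ ∑ i ∈ Finset.Icc 1 2, ⌊t * α ^ i⌋ :=
            Finset.sum_le_sum_of_subset_of_nonneg hsub
              (fun i hi _ => le_trans zero_le_one (stmt12_pos ht hα' (Finset.mem_Icc.mp hi).1))
          rw [hS2] at hle
          linarith
        · have : ⌊t * α ^ 3⌋ ≤ ⌊t * α ^ 4⌋ := stmt12_mono ht0 hα' (by omega)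
          linarith
      · -- case B2 : forced s1 = 1, s2 = 3, s3 = 5, take v = 7
        push_neg at hc2
        have htα : t * α ^ 1 < 2 := by
          have := Int.lt_floor_add_one (t * α ^ 1)
          rw [hs1] at this
          push_cast at this
          linarith
        have hs2ub : ⌊t * α ^ 2⌋ ≤ 3 := by
          have h4 : t * α ^ 2 < 4 := by
            have : t * α ^ 2 = (t * α ^ 1) * α := by ring
            nlinarith
          have h5 : ⌊t * α ^ 2⌋ < (4:ℤ) := Int.floor_lt.mpr (by push_cast; linarith)
          omega
        have hs3 : ⌊t * α ^ 3⌋ = 5 := by omega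
        have hs2 : ⌊t * α ^ 2⌋ = 3 := by omega
        refine ⟨7, ?_, by omega, by omega⟩
        rintro ⟨I, hI1, hIs⟩
        have hb : (7:ℤ) < ⌊t * α ^ (3+1)⌋ := by
          have : (3:ℕ) + 1 = 4 := rfl
          rw [this]; omega
        have hmem : ∀ j ∈ I, j ≤ 3 := stmt12_mem_le ht hα' hI1 hIs hb
        have hsub : I ⊆ ({1, 2, 3} : Finset ℕ) := by
          intro i hi
          have h1 := hI1 i hi
          have h2 := hmem i hi
          simp only [Finset.mem_insert, Finset.mem_singleton]
          omega
        have e1 : ({1, 2, 3} : Finset ℕ) ∩ I = I := Finset.inter_eq_right.mpr hsub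
        have e2 := Finset.sum_ite_mem ({1, 2, 3} : Finset ℕ) I (fun i => ⌊t * α ^ i⌋)
        rw [e1] at e2
        rw [← e2, Finset.sum_insert (by decide), Finset.sum_insert (by decide),
          Finset.sum_singleton] at hIs
        rw [hs1, hs2, hs3] at hIs
        split_ifs at hIs <;> omega
  -- iterate the step
  have all : ∀ j : ℕ, ∃ v : ℤ,
      (¬ ∃ I : Finset ℕ, (∀ i ∈ I, 1 ≤ i) ∧ v = ∑ i ∈ I, ⌊t * α ^ i⌋) ∧
      (∑ i ∈ Finset.Icc 1 (2+2*j), ⌊t * α ^ i⌋) < v ∧ v < ⌊t * α ^ (2+2*j+2)⌋ := by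
    intro j
    induction j with
    | zero => simpa using base
    | succ n ih =>
      have h := step (2+2*n) ih
      have e : 2+2*(n+1) = 2+2*n+2 := by ring
      rw [e]
      exact h
  -- conclude
  obtain ⟨v, hvR, hlo, _⟩ := all N
  have hcard : ((2+2*N : ℕ) : ℤ) ≤ ∑ i ∈ Finset.Icc 1 (2+2*N), ⌊t * α ^ i⌋ := by
    calc ((2+2*N : ℕ) : ℤ) = ∑ _i ∈ Finset.Icc 1 (2+2*N), (1:ℤ) := by
          rw [Finset.sum_const, Nat.card_Icc]
          simp
      _ ≤ ∑ i ∈ Finset.Icc 1 (2+2*N), ⌊t * α ^ i⌋ :=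
          Finset.sum_le_sum (fun i hi => stmt12_pos ht hα' (Finset.mem_Icc.mp hi).1)
  have hvN : (N : ℤ) ≤ v := by push_cast at hcard ⊢; linarith
  have hv0 : (0 : ℤ) ≤ v := le_trans (by positivity) hvN
  obtain ⟨I, hI1, hIs⟩ := hN v.toNat (by omega)
  apply hvR
  refine ⟨I, hI1, ?_⟩
  rwa [Int.toNat_of_nonneg hv0] at hIs
end

section
/- If (1+√5)/2 ≤ α < 5^(1/3) and 1 ≤ t < min(3/α², 5/α³), then s_1 = 1, s_2 = 2, s_3 = 4 (where s_n = ⌊tα^n⌋), and every positive integer is a sum of distinct elements of the sequence (s_n). -/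
set_option maxHeartbeats 1000000

/-- Brown's completeness criterion style representation lemma. -/
lemma brown_rep (s : ℕ → ℤ) (hs1 : s 1 = 1)
    (hb : ∀ n, 1 ≤ n → s (n + 1) ≤ (∑ i ∈ Finset.Icc 1 n, s i) + 1) :
    ∀ n, ∀ m : ℤ, 0 ≤ m → m ≤ ∑ i ∈ Finset.Icc 1 n, s i →
      ∃ I : Finset ℕ, (∀ i ∈ I, 1 ≤ i ∧ i ≤ n) ∧ m = ∑ i ∈ I, s i := by
  intro n
  induction n with
  | zero =>
    intro m hm0 hm1
    rw [Finset.Icc_eq_empty (by omega : ¬(1:ℕ) ≤ 0), Finset.sum_empty] at hm1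
    refine ⟨∅, by simp, by simpa using le_antisymm hm1 hm0⟩
  | succ n ih =>
    intro m hm0 hm1
    by_cases hle : m ≤ ∑ i ∈ Finset.Icc 1 n, s i
    · obtain ⟨I, hI, hsum⟩ := ih m hm0 hle
      exact ⟨I, fun i hi => ⟨(hI i hi).1, le_trans (hI i hi).2 (Nat.le_succ n)⟩, hsum⟩
    · push_neg at hle
      have hsplit : ∑ i ∈ Finset.Icc 1 (n + 1), s i
          = (∑ i ∈ Finset.Icc 1 n, s i) + s (n + 1) :=
        Finset.sum_Icc_succ_top (by omega) _
      rcases Nat.eq_zero_or_pos n with rfl | hn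
      · have h0 : ∑ i ∈ Finset.Icc 1 0, s i = 0 := by
          rw [Finset.Icc_eq_empty (by omega : ¬(1:ℕ) ≤ 0), Finset.sum_empty]
        have hm : m = 1 := by
          rw [hsplit, h0, hs1] at hm1
          rw [h0] at hle
          omega
        exact ⟨{1}, by simp, by simp [hm, hs1]⟩
      · have hbn := hb n hn
        have hm0' : 0 ≤ m - s (n + 1) := by omega
        have hm1' : m - s (n + 1) ≤ ∑ i ∈ Finset.Icc 1 n, s i := by
          rw [hsplit] at hm1; omega
        obtain ⟨I, hI, hsum⟩ := ih (m - s (n + 1)) hm0' hm1'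
        have hnotmem : (n + 1) ∉ I := fun h => by
          have := (hI _ h).2; omega
        refine ⟨insert (n + 1) I, ?_, ?_⟩
        · intro i hi
          rcases Finset.mem_insert.mp hi with rfl | hi
          · omega
          · exact ⟨(hI i hi).1, le_trans (hI i hi).2 (Nat.le_succ n)⟩
        · rw [Finset.sum_insert hnotmem, ← hsum]; ring

theorem stmt_13 (t α : ℝ) (ht1 : 1 ≤ t)
    (hα1 : (1 + Real.sqrt 5) / 2 ≤ α) (hα2 : α < (5 : ℝ) ^ ((1 : ℝ) / 3))
    (ht2 : t < min (3 / α ^ 2) (5 / α ^ 3)) :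
    ⌊t * α ^ 1⌋ = 1 ∧ ⌊t * α ^ 2⌋ = 2 ∧ ⌊t * α ^ 3⌋ = 4 ∧
    ∀ m : ℕ, 0 < m →
      ∃ I : Finset ℕ, (∀ i ∈ I, 1 ≤ i) ∧ (m : ℤ) = ∑ i ∈ I, ⌊t * α ^ i⌋ := by
  have hsqrt5 : Real.sqrt 5 ^ 2 = 5 := Real.sq_sqrt (by norm_num)
  have hsqrt5' : (2.2 : ℝ) ≤ Real.sqrt 5 := by
    nlinarith [Real.sqrt_nonneg 5]
  have hα16 : (1.6 : ℝ) ≤ α := by linarith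
  have hα0 : (0 : ℝ) < α := by linarith
  have hαφ : α + 1 ≤ α ^ 2 := by
    nlinarith [mul_nonneg (by linarith : (0:ℝ) ≤ α - (1 + Real.sqrt 5) / 2)
      (by nlinarith [Real.sqrt_nonneg 5] : (0:ℝ) ≤ α - (1 - Real.sqrt 5) / 2)]
  have hcube : α ^ 3 < 5 := by
    have h5 : ((5 : ℝ) ^ ((1 : ℝ) / 3)) ^ (3 : ℕ) = 5 := by
      rw [← Real.rpow_natCast ((5 : ℝ) ^ ((1 : ℝ) / 3)) 3,
        ← Real.rpow_mul (by norm_num)]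
      norm_num
    calc α ^ 3 < ((5 : ℝ) ^ ((1 : ℝ) / 3)) ^ (3 : ℕ) :=
          pow_lt_pow_left₀ hα2 (le_of_lt hα0) (by norm_num)
      _ = 5 := h5
  have ht2a : t * α ^ 2 < 3 := by
    have h := lt_of_lt_of_le ht2 (min_le_left _ _)
    rw [lt_div_iff₀ (by positivity)] at h
    linarith
  have ht2b : t * α ^ 3 < 5 := by
    have h := lt_of_lt_of_le ht2 (min_le_right _ _)
    rw [lt_div_iff₀ (by positivity)] at h
    linarith
  have ht0 : (0 : ℝ) < t := by linarith
  -- floor values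
  have hf1lo : (1 : ℝ) ≤ t * α ^ 1 := by nlinarith
  have hf1hi : t * α ^ 1 < 2 := by nlinarith
  have hf2lo : (2 : ℝ) ≤ t * α ^ 2 := by nlinarith
  have hf3lo : (4 : ℝ) ≤ t * α ^ 3 := by nlinarith
  have hs1 : ⌊t * α ^ 1⌋ = 1 := by
    rw [Int.floor_eq_iff]
    refine ⟨by exact_mod_cast hf1lo, by push_cast; linarith⟩
  have hs2 : ⌊t * α ^ 2⌋ = 2 := by
    rw [Int.floor_eq_iff]
    refine ⟨by exact_mod_cast hf2lo, by push_cast; linarith⟩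
  have hs3 : ⌊t * α ^ 3⌋ = 4 := by
    rw [Int.floor_eq_iff]
    refine ⟨by exact_mod_cast hf3lo, by push_cast; linarith⟩
  have hpos : ∀ i, 1 ≤ i → 1 ≤ ⌊t * α ^ i⌋ := by
    intro i hi
    have hαi : α ≤ α ^ i := by
      calc α = α ^ 1 := (pow_one α).symm
        _ ≤ α ^ i := pow_le_pow_right₀ (by linarith) hi
    have : (1 : ℝ) ≤ t * α ^ i := by nlinarith
    exact Int.le_floor.mpr (by exact_mod_cast this)
  -- growth bound: ⌊t * α ^ (j+3)⌋ ≤ ⌊t * α ^ (j+2)⌋ + ⌊t * α ^ (j+1)⌋ + ⌊t * α ^ j⌋ + 1 for j ≥ 1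
  have hgrow : ∀ j, 1 ≤ j → ⌊t * α ^ (j + 3)⌋ ≤ ⌊t * α ^ (j + 2)⌋ + ⌊t * α ^ (j + 1)⌋ + ⌊t * α ^ j⌋ + 1 := by
    intro j hj
    have hmargin : 1 ≤ α * (α ^ 2 + α + 1 - α ^ 3) := by
      nlinarith [mul_pos (by linarith : (0:ℝ) < α - 1) (by linarith : (0:ℝ) < 5 - α ^ 3),
        sq_nonneg (α - 2)]
    have hmpos : 0 < α ^ 2 + α + 1 - α ^ 3 := by nlinarith
    have hαj : α ≤ α ^ j := by
      calc α = α ^ 1 := (pow_one α).symm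
        _ ≤ α ^ j := pow_le_pow_right₀ (by linarith) hj
    have htj : α ≤ t * α ^ j := by nlinarith [pow_pos hα0 j]
    have hkey : 1 ≤ t * α ^ j * (α ^ 2 + α + 1 - α ^ 3) := by
      calc (1 : ℝ) ≤ α * (α ^ 2 + α + 1 - α ^ 3) := hmargin
        _ ≤ t * α ^ j * (α ^ 2 + α + 1 - α ^ 3) :=
          mul_le_mul_of_nonneg_right htj (le_of_lt hmpos)
    have hreal : t * α ^ (j + 3) + 1 ≤ t * α ^ (j + 2) + t * α ^ (j + 1) + t * α ^ j := by
      have e : t * α ^ (j + 2) + t * α ^ (j + 1) + t * α ^ j - t * α ^ (j + 3)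
          = t * α ^ j * (α ^ 2 + α + 1 - α ^ 3) := by ring
      linarith
    have f1 : t * α ^ (j + 2) < ⌊t * α ^ (j + 2)⌋ + 1 := Int.lt_floor_add_one _
    have f2 : t * α ^ (j + 1) < ⌊t * α ^ (j + 1)⌋ + 1 := Int.lt_floor_add_one _
    have f3 : t * α ^ j < ⌊t * α ^ j⌋ + 1 := Int.lt_floor_add_one _
    have : ⌊t * α ^ (j + 3)⌋ < ⌊t * α ^ (j + 2)⌋ + ⌊t * α ^ (j + 1)⌋ + ⌊t * α ^ j⌋ + 2 := by
      apply Int.floor_lt.mpr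
      push_cast
      linarith
    omega
  -- Brown condition
  have hb : ∀ n, 1 ≤ n → ⌊t * α ^ (n + 1)⌋ ≤ (∑ i ∈ Finset.Icc 1 n, ⌊t * α ^ i⌋) + 1 := by
    intro n hn
    rcases n with _ | _ | _ | k
    · omega
    · simp only [Finset.Icc_self, Finset.sum_singleton]
      rw [hs2, hs1]; norm_num
    · have h2 : ∑ i ∈ Finset.Icc 1 2, ⌊t * α ^ i⌋ = ⌊t * α ^ 1⌋ + ⌊t * α ^ 2⌋ := by
        rw [show (2:ℕ) = 1 + 1 from rfl, Finset.sum_Icc_succ_top (by norm_num)]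
        simp
      rw [h2, hs3, hs1, hs2]
      norm_num
    ·
      have hg := hgrow (k + 1) (by omega)
      have e1 : ∑ i ∈ Finset.Icc 1 (k + 3), ⌊t * α ^ i⌋
          = (∑ i ∈ Finset.Icc 1 (k + 2), ⌊t * α ^ i⌋) + ⌊t * α ^ (k + 3)⌋ :=
        Finset.sum_Icc_succ_top (by omega) _
      have e2 : ∑ i ∈ Finset.Icc 1 (k + 2), ⌊t * α ^ i⌋
          = (∑ i ∈ Finset.Icc 1 (k + 1), ⌊t * α ^ i⌋) + ⌊t * α ^ (k + 2)⌋ :=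
        Finset.sum_Icc_succ_top (by omega) _
      have e3 : ∑ i ∈ Finset.Icc 1 (k + 1), ⌊t * α ^ i⌋
          = (∑ i ∈ Finset.Icc 1 k, ⌊t * α ^ i⌋) + ⌊t * α ^ (k + 1)⌋ :=
        Finset.sum_Icc_succ_top (by omega) _
      have hSk : 0 ≤ ∑ i ∈ Finset.Icc 1 k, ⌊t * α ^ i⌋ :=
        Finset.sum_nonneg fun i hi => le_trans (by norm_num)
          (hpos i (Finset.mem_Icc.mp hi).1)
      have : ⌊t * α ^ (k + 1 + 3)⌋ ≤ ⌊t * α ^ (k + 1 + 2)⌋ + ⌊t * α ^ (k + 1 + 1)⌋ + ⌊t * α ^ (k + 1)⌋ + 1 := hg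
      rw [e1, e2, e3]
      have h4 : k + 1 + 3 = k + 3 + 1 := by omega
      have h5 : k + 1 + 2 = k + 3 := by omega
      have h6 : k + 1 + 1 = k + 2 := by omega
      rw [h4, h5, h6] at this
      linarith
  refine ⟨hs1, hs2, hs3, ?_⟩
  intro m hm
  have hSm : (m : ℤ) ≤ ∑ i ∈ Finset.Icc 1 m, ⌊t * α ^ i⌋ := by
    calc (m : ℤ) = ∑ i ∈ Finset.Icc 1 m, 1 := by
          rw [Finset.sum_const, Nat.card_Icc]; simp
      _ ≤ ∑ i ∈ Finset.Icc 1 m, ⌊t * α ^ i⌋ :=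
        Finset.sum_le_sum fun i hi => hpos i (Finset.mem_Icc.mp hi).1
  obtain ⟨I, hI, hsum⟩ := brown_rep (fun i => ⌊t * α ^ i⌋) hs1 hb m (m : ℤ) (by positivity) hSm
  exact ⟨I, fun i hi => (hI i hi).1, hsum⟩
end

section
/- If (1+√5)/2 ≤ α < 5^(1/3) and t ≥ min(3/α², 5/α³) with t ≥ 1, then the sequence s_n = ⌊tα^n⌋ is not complete. -/
/-- `a` is not a sum of distinct terms `s i` with `i ≥ 1`. -/
def NRaux (s : ℕ → ℤ) (a : ℤ) : Prop :=
  ∀ I : Finset ℕ, (∀ i ∈ I, 1 ≤ i) → a ≠ ∑ i ∈ I, s i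

lemma auxStep (s : ℕ → ℤ) (hpos : ∀ i, 1 ≤ i → 1 ≤ s i)
    (hmono : ∀ i j, i ≤ j → s i ≤ s j)
    (hfib : ∀ k, s k + s (k + 1) ≤ s (k + 2))
    (n : ℕ) (a : ℤ) (hNR : NRaux s a)
    (hL : ∑ i ∈ Finset.Icc 1 n, s i < a) (hU : a < s (n + 2)) :
    NRaux s (a + s (n + 3)) ∧ (∑ i ∈ Finset.Icc 1 (n + 2), s i < a + s (n + 3))
      ∧ a + s (n + 3) < s (n + 4) := by
  have hexp : ∑ i ∈ Finset.Icc 1 (n + 2), s i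
      = ∑ i ∈ Finset.Icc 1 n, s i + s (n + 1) + s (n + 2) := by
    rw [Finset.sum_Icc_succ_top (by omega), Finset.sum_Icc_succ_top (by omega)]
  have hf1 := hfib (n + 1)
  have hf2 := hfib (n + 2)
  have hU4 : a + s (n + 3) < s (n + 4) := by
    have : a + s (n + 3) < s (n + 2) + s (n + 3) := by linarith
    linarith
  refine ⟨?_, by linarith, hU4⟩
  intro I hI1 hsum
  have hIle : ∀ i ∈ I, i ≤ n + 3 := by
    intro i hi
    by_contra h
    push_neg at h
    have h1 : s (n + 4) ≤ s i := hmono _ _ (by omega)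
    have h2 : s i ≤ ∑ j ∈ I, s j :=
      Finset.single_le_sum (fun j hj => le_trans zero_le_one (hpos j (hI1 j hj))) hi
    omega
  by_cases hmem : (n + 3) ∈ I
  · have herase := Finset.sum_erase_add I s hmem
    refine hNR (I.erase (n + 3)) (fun i hi => hI1 i (Finset.mem_of_mem_erase hi)) ?_
    have : a + s (n + 3) = ∑ i ∈ I.erase (n + 3), s i + s (n + 3) := by
      rw [herase]; exact hsum
    linarith
  · have hsub : I ⊆ Finset.Icc 1 (n + 2) := by
      intro i hi
      have h1 := hI1 i hi
      have h2 := hIle i hi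
      have h3 : i ≠ n + 3 := fun h => hmem (h ▸ hi)
      exact Finset.mem_Icc.mpr ⟨h1, by omega⟩
    have hle : ∑ i ∈ I, s i ≤ ∑ i ∈ Finset.Icc 1 (n + 2), s i :=
      Finset.sum_le_sum_of_subset_of_nonneg hsub
        (fun i hi _ => le_trans zero_le_one (hpos i (Finset.mem_Icc.mp hi).1))
    have : a + s (n + 3) ≤ ∑ i ∈ Finset.Icc 1 n, s i + s (n + 1) + s (n + 2) := by
      rw [hsum]; omega
    linarith

lemma auxIter (s : ℕ → ℤ) (hpos : ∀ i, 1 ≤ i → 1 ≤ s i)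
    (hmono : ∀ i j, i ≤ j → s i ≤ s j)
    (hfib : ∀ k, s k + s (k + 1) ≤ s (k + 2))
    (n₀ : ℕ) (a₀ : ℤ) (hNR : NRaux s a₀)
    (hL : ∑ i ∈ Finset.Icc 1 n₀, s i < a₀) (hU : a₀ < s (n₀ + 2)) (ha₀ : 0 ≤ a₀) :
    ∀ k : ℕ, ∃ a : ℤ, NRaux s a ∧ (k : ℤ) ≤ a := by
  have main : ∀ k : ℕ, ∃ (n : ℕ) (a : ℤ), NRaux s a ∧
      (∑ i ∈ Finset.Icc 1 n, s i < a) ∧ a < s (n + 2) ∧ (k : ℤ) ≤ a := by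
    intro k
    induction k with
    | zero => exact ⟨n₀, a₀, hNR, hL, hU, ha₀⟩
    | succ k ih =>
      obtain ⟨n, a, h1, h2, h3, h4⟩ := ih
      obtain ⟨g1, g2, g3⟩ := auxStep s hpos hmono hfib n a h1 h2 h3
      refine ⟨n + 2, a + s (n + 3), g1, g2, g3, ?_⟩
      have := hpos (n + 3) (by omega)
      push_cast
      linarith
  intro k
  obtain ⟨n, a, h1, _, _, h4⟩ := main k
  exact ⟨a, h1, h4⟩

theorem stmt_14 (t α : ℝ) (ht1 : 1 ≤ t)
    (hα1 : (1 + Real.sqrt 5) / 2 ≤ α) (hα2 : α < (5 : ℝ) ^ ((1 : ℝ) / 3))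
    (ht2 : min (3 / α ^ 2) (5 / α ^ 3) ≤ t) :
    ¬ ∃ N : ℕ, ∀ m : ℕ, N ≤ m →
      ∃ I : Finset ℕ, (∀ i ∈ I, 1 ≤ i) ∧
        (m : ℤ) = ∑ i ∈ I, ⌊t * α ^ i⌋ := by
  rintro ⟨N, hN⟩
  set s : ℕ → ℤ := fun i => ⌊t * α ^ i⌋ with hsdef
  -- basic facts about α
  have hsqrt5 : Real.sqrt 5 ^ 2 = 5 := Real.sq_sqrt (by norm_num)
  have hsqrt5' : (2 : ℝ) ≤ Real.sqrt 5 := by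
    nlinarith [Real.sqrt_nonneg 5]
  have hα32 : (3 : ℝ) / 2 ≤ α := by
    have : (3 : ℝ) / 2 ≤ (1 + Real.sqrt 5) / 2 := by linarith
    linarith
  have hα0 : (0 : ℝ) < α := by linarith
  have hαφ : α + 1 ≤ α ^ 2 := by
    nlinarith [hα1, hsqrt5, Real.sqrt_nonneg 5]
  have ht0 : (0 : ℝ) < t := by linarith
  -- positivity of terms
  have hpos : ∀ i, 1 ≤ i → 1 ≤ s i := by
    intro i hi
    have h1 : (1 : ℝ) ≤ α ^ i := by
      have := pow_le_pow_right₀ (by linarith : (1:ℝ) ≤ α) (Nat.zero_le i)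
      simpa using this
    have : (1 : ℝ) ≤ t * α ^ i := by nlinarith
    exact Int.le_floor.mpr (by exact_mod_cast this)
  have hmono : ∀ i j, i ≤ j → s i ≤ s j := by
    intro i j hij
    apply Int.floor_le_floor
    have := pow_le_pow_right₀ (by linarith : (1:ℝ) ≤ α) hij
    nlinarith
  have hfib : ∀ k, s k + s (k + 1) ≤ s (k + 2) := by
    intro k
    apply Int.le_floor.mpr
    push_cast
    have h1 : (s k : ℝ) ≤ t * α ^ k := Int.floor_le _
    have h2 : (s (k+1) : ℝ) ≤ t * α ^ (k+1) := Int.floor_le _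
    have hp : (0 : ℝ) < α ^ k := pow_pos hα0 k
    have key : t * α ^ k + t * α ^ (k + 1) ≤ t * α ^ (k + 2) := by
      have : α ^ (k + 1) = α ^ k * α := pow_succ α k
      have h2' : α ^ (k + 2) = α ^ k * α ^ 2 := by ring
      rw [this, h2']
      have hh := mul_le_mul_of_nonneg_left hαφ (by positivity : (0:ℝ) ≤ t * α ^ k)
      nlinarith [hh]
    linarith
  -- base case
  have base : ∃ (n₀ : ℕ) (a₀ : ℤ), NRaux s a₀ ∧
      (∑ i ∈ Finset.Icc 1 n₀, s i < a₀) ∧ a₀ < s (n₀ + 2) ∧ 0 ≤ a₀ := by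
    rcases le_or_gt 2 (t * α) with h2 | h2
    · -- s 1 ≥ 2, base a = 1 at n₀ = 0
      have hs1 : 2 ≤ s 1 := Int.le_floor.mpr (by push_cast; simpa using h2)
      refine ⟨0, 1, ?_, by simp, ?_, by norm_num⟩
      · intro I hI1 hsum
        rcases Finset.eq_empty_or_nonempty I with rfl | ⟨i₀, hi₀⟩
        · simp at hsum
        · have h1 : s i₀ ≤ ∑ j ∈ I, s j :=
            Finset.single_le_sum (fun j hj => le_trans zero_le_one (hpos j (hI1 j hj))) hi₀
          have h2 : 2 ≤ s i₀ := le_trans hs1 (hmono 1 i₀ (hI1 i₀ hi₀))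
          omega
      · show (1:ℤ) < s 2
        have := hmono 1 2 (by omega)
        omega
    · -- s 1 ≤ 1
      have hs1 : s 1 ≤ 1 := by
        have : s 1 < 2 := Int.floor_lt.mpr (by push_cast; simpa using h2)
        omega
      rcases le_or_gt 3 (t * α ^ 2) with h3 | h3
      · -- s 2 ≥ 3, base a = 2 at n₀ = 0
        have hs2 : 3 ≤ s 2 := Int.le_floor.mpr (by exact_mod_cast h3)
        refine ⟨0, 2, ?_, by simp, by show (2:ℤ) < s 2; omega, by norm_num⟩
        intro I hI1 hsum
        have hIone : ∀ i ∈ I, i = 1 := by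
          intro i hi
          by_contra h
          have hi2 : 2 ≤ i := by have := hI1 i hi; omega
          have g1 : 3 ≤ s i := le_trans hs2 (hmono 2 i hi2)
          have g2 : s i ≤ ∑ j ∈ I, s j :=
            Finset.single_le_sum (fun j hj => le_trans zero_le_one (hpos j (hI1 j hj))) hi
          omega
        have : I ⊆ {1} := fun i hi => Finset.mem_singleton.mpr (hIone i hi)
        rcases Finset.subset_singleton_iff.mp this with rfl | rfl
        · simp at hsum
        · simp at hsum; omega
      · -- tα² < 3, so tα³ ≥ 5; base a = 4 at n₀ = 1
        have hs2 : s 2 ≤ 2 := by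
          have : s 2 < 3 := Int.floor_lt.mpr (by exact_mod_cast h3)
          omega
        have ht5 : 5 / α ^ 3 ≤ t := by
          have hα2pos : (0 : ℝ) < α ^ 2 := by positivity
          have : ¬ (3 / α ^ 2 ≤ t) := by
            intro h
            have := (div_le_iff₀ hα2pos).mp h
            linarith
          rcases min_le_iff.mp ht2 with h | h
          · exact absurd h this
          · exact h
        have hs3 : 5 ≤ s 3 := by
          apply Int.le_floor.mpr
          push_cast
          have hα3pos : (0 : ℝ) < α ^ 3 := by positivity
          exact (div_le_iff₀ hα3pos).mp ht5
        refine ⟨1, 4, ?_, ?_, by show (4:ℤ) < s 3; omega, by norm_num⟩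
        · intro I hI1 hsum
          have hIle : ∀ i ∈ I, i ≤ 2 := by
            intro i hi
            by_contra h
            push_neg at h
            have g1 : 5 ≤ s i := le_trans hs3 (hmono 3 i (by omega))
            have g2 : s i ≤ ∑ j ∈ I, s j :=
              Finset.single_le_sum (fun j hj => le_trans zero_le_one (hpos j (hI1 j hj))) hi
            omega
          have hsub : I ⊆ Finset.Icc 1 2 := fun i hi =>
            Finset.mem_Icc.mpr ⟨hI1 i hi, hIle i hi⟩
          have hle : ∑ i ∈ I, s i ≤ ∑ i ∈ Finset.Icc 1 2, s i :=
            Finset.sum_le_sum_of_subset_of_nonneg hsub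
              (fun i hi _ => le_trans zero_le_one (hpos i (Finset.mem_Icc.mp hi).1))
          have hIcc : ∑ i ∈ Finset.Icc 1 2, s i = s 1 + s 2 := by
            rw [Finset.sum_Icc_succ_top (by omega)]
            simp
          omega
        · have : ∑ i ∈ Finset.Icc 1 1, s i = s 1 := by simp
          omega
  obtain ⟨n₀, a₀, b1, b2, b3, b4⟩ := base
  obtain ⟨a, hNRa, hka⟩ := auxIter s hpos hmono hfib n₀ a₀ b1 b2 b3 b4 N
  have ha0 : 0 ≤ a := le_trans (by exact_mod_cast Nat.zero_le N) hka
  obtain ⟨I, hI1, hIsum⟩ := hN a.toNat (by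
    have := Int.toNat_of_nonneg ha0
    omega)
  refine hNRa I hI1 ?_
  have : ((a.toNat : ℤ)) = a := Int.toNat_of_nonneg ha0
  rw [← this]
  exact hIsum
end

section
/- If 1 < α < 3/2 and t ≥ 1, then the sequence s_n = ⌊tα^n⌋ is entirely complete (every positive integer is a sum of distinct elements) if and only if t < 2/α. -/
open Finset

private lemma complete_aux (a : ℕ → ℤ)
    (hstep : ∀ n, 1 ≤ n → a (n + 1) ≤ 1 + ∑ i ∈ Icc 1 n, a i) (ha1 : a 1 = 1) :
    ∀ n : ℕ, ∀ m : ℤ, 1 ≤ m → m ≤ ∑ i ∈ Icc 1 n, a i →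
      ∃ I : Finset ℕ, I ⊆ Icc 1 n ∧ m = ∑ i ∈ I, a i := by
  intro n
  induction n with
  | zero =>
      intro m h1 h2
      simp only [show Icc 1 0 = (∅ : Finset ℕ) from rfl, sum_empty] at h2
      omega
  | succ n ih =>
      intro m h1 h2
      by_cases hle : m ≤ ∑ i ∈ Icc 1 n, a i
      · obtain ⟨I, hsub, hsum⟩ := ih m h1 hle
        exact ⟨I, hsub.trans (Icc_subset_Icc_right (Nat.le_succ n)), hsum⟩
      · push_neg at hle
        have hsplit : ∑ i ∈ Icc 1 (n + 1), a i = ∑ i ∈ Icc 1 n, a i + a (n + 1) :=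
          Finset.sum_Icc_succ_top (by omega : 1 ≤ n + 1) a
        rcases Nat.eq_zero_or_pos n with rfl | hn
        · refine ⟨{1}, by simp, ?_⟩
          have h3 : ∑ i ∈ Icc 1 1, a i = a 1 := by simp
          rw [h3, ha1] at h2
          simp only [sum_singleton, ha1]
          omega
        · have hstep' := hstep n hn
          rw [hsplit] at h2
          have h3 : m - a (n + 1) ≤ ∑ i ∈ Icc 1 n, a i := by linarith
          by_cases h0 : m = a (n + 1)
          · refine ⟨{n + 1}, ?_, by simp [h0]⟩
            simp only [singleton_subset_iff, mem_Icc]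
            omega
          · have h5 : a (n + 1) ≤ m := by
              have := Int.add_one_le_iff.mpr hle
              linarith
            have h4 : 1 ≤ m - a (n + 1) := by
              rcases lt_or_eq_of_le h5 with h | h
              · omega
              · exact absurd h.symm h0
            obtain ⟨I, hsub, hsum⟩ := ih (m - a (n + 1)) h4 h3
            have hnot : n + 1 ∉ I := fun h => by
              have := (mem_Icc.mp (hsub h)).2; omega
            refine ⟨insert (n + 1) I, ?_, ?_⟩
            · intro x hx
              rcases mem_insert.mp hx with rfl | hx
              · exact mem_Icc.mpr ⟨by omega, le_rfl⟩
              · exact Icc_subset_Icc_right (Nat.le_succ n) (hsub hx)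
            · rw [sum_insert hnot]
              linarith [hsum]

theorem stmt_16 (t α : ℝ) (ht : 1 ≤ t) (hα1 : 1 < α) (hα2 : α < 3 / 2) :
    (∀ m : ℕ, 0 < m →
      ∃ I : Finset ℕ, (∀ i ∈ I, 1 ≤ i) ∧ (m : ℤ) = ∑ i ∈ I, ⌊t * α ^ i⌋) ↔
    t < 2 / α := by
  have hαpos : (0 : ℝ) < α := by linarith
  have ht0 : (0 : ℝ) < t := by linarith
  have hαi : ∀ i : ℕ, 1 ≤ i → α ≤ α ^ i := by
    intro i hi
    calc α = α ^ 1 := (pow_one α).symm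
    _ ≤ α ^ i := pow_le_pow_right₀ (le_of_lt hα1) hi
  have hpos : ∀ i : ℕ, 1 ≤ i → (1 : ℤ) ≤ ⌊t * α ^ i⌋ := by
    intro i hi
    apply Int.le_floor.mpr
    push_cast
    have h1 : α ≤ α ^ i := hαi i hi
    nlinarith
  constructor
  · intro h
    by_contra hlt
    push_neg at hlt
    have h2 : 2 ≤ t * α := by
      rw [div_le_iff₀ hαpos] at hlt
      linarith
    obtain ⟨I, hI1, hIsum⟩ := h 1 one_pos
    have key : ∀ i ∈ I, (2 : ℤ) ≤ ⌊t * α ^ i⌋ := by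
      intro i hi
      apply Int.le_floor.mpr
      push_cast
      have h1 : α ≤ α ^ i := hαi i (hI1 i hi)
      nlinarith
    have hne : I.Nonempty := by
      rcases I.eq_empty_or_nonempty with rfl | h'
      · simp at hIsum
      · exact h'
    have : (2 : ℤ) ≤ ∑ i ∈ I, ⌊t * α ^ i⌋ := by
      obtain ⟨j, hj⟩ := hne
      calc (2 : ℤ) ≤ ⌊t * α ^ j⌋ := key j hj
      _ ≤ ∑ i ∈ I, ⌊t * α ^ i⌋ := by
          apply Finset.single_le_sum (fun i hi => ?_) hj
          linarith [key i hi]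
    omega
  · intro h
    have htα2 : t * α < 2 := (lt_div_iff₀ hαpos).mp h
    have ha1 : ⌊t * α ^ 1⌋ = 1 := by
      rw [pow_one]
      have l1 : (1 : ℤ) ≤ ⌊t * α⌋ := Int.le_floor.mpr (by push_cast; nlinarith)
      have l2 : ⌊t * α⌋ < 2 := Int.floor_lt.mpr (by push_cast; linarith)
      omega
    have ha2 : ⌊t * α ^ 2⌋ ≤ 2 := by
      have l2 : ⌊t * α ^ 2⌋ < 3 := Int.floor_lt.mpr (by push_cast; nlinarith)
      omega
    have hrec : ∀ n : ℕ, 1 ≤ n →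
        ⌊t * α ^ (n + 2)⌋ ≤ ⌊t * α ^ (n + 1)⌋ + ⌊t * α ^ n⌋ + 1 := by
      intro n hn
      have hq : α ^ 2 < α + 1 := by nlinarith
      have hpn : (0 : ℝ) < t * α ^ n := by positivity
      have key : t * α ^ (n + 2) < t * α ^ (n + 1) + t * α ^ n := by
        have : t * α ^ n * α ^ 2 < t * α ^ n * (α + 1) :=
          mul_lt_mul_of_pos_left hq hpn
        calc t * α ^ (n + 2) = t * α ^ n * α ^ 2 := by ring
        _ < t * α ^ n * (α + 1) := this
        _ = t * α ^ (n + 1) + t * α ^ n := by ring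
      have l1 : t * α ^ (n + 1) < (⌊t * α ^ (n + 1)⌋ : ℝ) + 1 :=
        Int.lt_floor_add_one _
      have l2 : t * α ^ n < (⌊t * α ^ n⌋ : ℝ) + 1 := Int.lt_floor_add_one _
      have : ⌊t * α ^ (n + 2)⌋ < ⌊t * α ^ (n + 1)⌋ + ⌊t * α ^ n⌋ + 2 := by
        apply Int.floor_lt.mpr
        push_cast
        linarith
      omega
    have hstep : ∀ n : ℕ, 1 ≤ n →
        ⌊t * α ^ (n + 1)⌋ ≤ 1 + ∑ i ∈ Icc 1 n, ⌊t * α ^ i⌋ := by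
      intro n hn
      match n, hn with
      | 1, _ =>
          have : ∑ i ∈ Icc 1 1, ⌊t * α ^ i⌋ = ⌊t * α ^ 1⌋ := by simp
          rw [this, ha1]
          exact le_trans ha2 (by norm_num)
      | (k + 2), _ =>
          have hrec' := hrec (k + 1) (by omega)
          have hpair : ⌊t * α ^ (k + 2)⌋ + ⌊t * α ^ (k + 1)⌋ ≤
              ∑ i ∈ Icc 1 (k + 2), ⌊t * α ^ i⌋ := by
            have hsub : ({k + 1, k + 2} : Finset ℕ) ⊆ Icc 1 (k + 2) := by
              intro x hx
              simp only [mem_insert, mem_singleton] at hx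
              rcases hx with rfl | rfl <;> (rw [mem_Icc]; omega)
            calc ⌊t * α ^ (k + 2)⌋ + ⌊t * α ^ (k + 1)⌋
                = ∑ i ∈ ({k + 1, k + 2} : Finset ℕ), ⌊t * α ^ i⌋ := by
                  rw [sum_pair (by omega : k + 1 ≠ k + 2)]; ring
            _ ≤ ∑ i ∈ Icc 1 (k + 2), ⌊t * α ^ i⌋ := by
                  apply sum_le_sum_of_subset_of_nonneg hsub
                  intro i hi _
                  have := hpos i (mem_Icc.mp hi).1
                  omega
          have : (k + 2) + 1 = (k + 1) + 2 := by omega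
          rw [this]
          linarith
    intro m hm
    have hsum_ge : (m : ℤ) ≤ ∑ i ∈ Icc 1 m, ⌊t * α ^ i⌋ := by
      calc (m : ℤ) = ∑ _i ∈ Icc 1 m, (1 : ℤ) := by
            rw [sum_const, Nat.card_Icc]
            simp
      _ ≤ ∑ i ∈ Icc 1 m, ⌊t * α ^ i⌋ :=
            sum_le_sum fun i hi => hpos i (mem_Icc.mp hi).1
    obtain ⟨I, hsub, hIsum⟩ := complete_aux (fun i => ⌊t * α ^ i⌋)
      hstep ha1 m (m : ℤ) (by exact_mod_cast hm) hsum_ge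
    exact ⟨I, fun i hi => (mem_Icc.mp (hsub hi)).1, hIsum⟩
end

section
/- Let t > 0 and suppose 1 < α ≤ 1 + 1/x for some real x > t, with s_n = ⌊tα^n⌋. Then every integer m with s_1 ≤ m ≤ x occurs as a term of the sequence (s_n), i.e., m = s_n for some n. -/
theorem stmt_18 (t α x : ℝ) (ht : 0 < t) (htx : t < x)
    (hα1 : 1 < α) (hα2 : α ≤ 1 + 1 / x) :
    ∀ m : ℤ, ⌊t * α ^ 1⌋ ≤ m → (m : ℝ) ≤ x →
      ∃ n : ℕ, 1 ≤ n ∧ ⌊t * α ^ n⌋ = m := by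
  intro m hm1 hmx
  have hx : (0:ℝ) < x := ht.trans htx
  have hα0 : (0:ℝ) < α := lt_trans one_pos hα1
  have hpos : ∀ n : ℕ, 0 < t * α ^ n := fun n => mul_pos ht (pow_pos hα0 n)
  -- key step: if ⌊t α^n⌋ < m then ⌊t α^(n+1)⌋ ≤ m
  have key : ∀ n : ℕ, ⌊t * α ^ n⌋ < m → ⌊t * α ^ (n+1)⌋ ≤ m := by
    intro n h
    have hm0 : (0:ℤ) < m := lt_of_le_of_lt (Int.le_floor.mpr (by exact_mod_cast (hpos n).le)) h
    have hm0' : (0:ℝ) < (m:ℝ) := by exact_mod_cast hm0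
    have h1 : t * α ^ n < (m:ℝ) := by
      have := (Int.floor_lt).mp h
      exact this
    have h2 : t * α ^ (n+1) < (m:ℝ) * (1 + 1/x) := by
      have : t * α ^ (n+1) = (t * α ^ n) * α := by ring
      rw [this]
      calc (t * α ^ n) * α < (m:ℝ) * α :=
            mul_lt_mul_of_pos_right h1 hα0
        _ ≤ (m:ℝ) * (1 + 1/x) := mul_le_mul_of_nonneg_left hα2 hm0'.le
    have h3 : (m:ℝ) * (1 + 1/x) ≤ (m:ℝ) + 1 := by
      have : (m:ℝ) * (1 + 1/x) = m + m / x := by field_simp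
      rw [this]
      have : (m:ℝ) / x ≤ 1 := (div_le_one hx).mpr hmx
      linarith
    have : t * α ^ (n+1) < ((m:ℤ) + 1 : ℤ) := by push_cast; linarith
    have := Int.floor_lt.mpr this
    omega
  -- unboundedness
  have hub : ∃ k : ℕ, m ≤ ⌊t * α ^ (k+1)⌋ := by
    obtain ⟨k, hk⟩ := pow_unbounded_of_one_lt ((m:ℝ)/t) hα1
    refine ⟨k, Int.le_floor.mpr ?_⟩
    have h1 : (m:ℝ) < t * α ^ k := by
      have := mul_lt_mul_of_pos_left hk ht
      rwa [mul_div_cancel₀ _ (ne_of_gt ht)] at this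
    have h2 : t * α ^ k ≤ t * α ^ (k+1) :=
      mul_le_mul_of_nonneg_left (pow_le_pow_right₀ hα1.le (Nat.le_succ k)) ht.le
    linarith
  classical
  let k := Nat.find hub
  have hk : m ≤ ⌊t * α ^ (k+1)⌋ := Nat.find_spec hub
  refine ⟨k+1, Nat.le_add_left 1 k, ?_⟩
  rcases Nat.eq_zero_or_pos k with h0 | hkpos
  · have : k + 1 = 1 := by omega
    rw [this]
    rw [h0] at hk
    norm_num at hk
    simp only [pow_one] at hm1 ⊢
    omega
  · obtain ⟨j, hj⟩ : ∃ j, k = j + 1 := ⟨k - 1, by omega⟩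
    have hlt : ¬ m ≤ ⌊t * α ^ (j+1)⌋ := Nat.find_min hub (by omega)
    have := key (j+1) (by omega)
    rw [hj] at hk
    rw [hj]
    omega
end

section
/- For every real t ≥ 1 and every α with 1 < α ≤ 1 + 1/(⌈t⌉ + 2⌈√t⌉), the sequence s_n = ⌊tα^n⌋ is complete: every sufficiently large positive integer is a sum of distinct elements of the sequence. -/
set_option maxHeartbeats 1000000

lemma aux_choose_two (j : ℕ) : 2 * (j.choose 2 : ℤ) = j * (j - 1) := by
  induction j with
  | zero => simp
  | succ n ih =>
    rw [Nat.choose_succ_succ]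
    push_cast at ih ⊢
    rw [Nat.choose_one_right]
    push_cast
    linarith

lemma aux_subset_sum : ∀ (j : ℕ) (a b c : ℤ),
    (j : ℤ) * a + (j.choose 2 : ℤ) ≤ c → c ≤ (j : ℤ) * b - (j.choose 2 : ℤ) →
    ∃ S : Finset ℤ, S ⊆ Finset.Icc a b ∧ S.card = j ∧ ∑ x ∈ S, x = c := by
  intro j
  induction j with
  | zero =>
    intro a b c h1 h2
    refine ⟨∅, by simp, by simp, ?_⟩
    simp at h1 h2 ⊢
    omega
  | succ j ih =>
    intro a b c h1 h2
    have hC : (((j+1).choose 2 : ℕ) : ℤ) = (j.choose 2 : ℤ) + j := by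
      rw [Nat.choose_succ_succ, Nat.choose_one_right]
      push_cast; ring
    have hJ : (0:ℤ) ≤ (j:ℤ) := Int.natCast_nonneg j
    have hC2 := aux_choose_two j
    have hC2' := aux_choose_two (j+1)
    push_cast at h1 h2
    -- b - a ≥ j
    have hab : a + (j:ℤ) ≤ b := by nlinarith
    set x := min b (c - ((j:ℤ) * a + (j.choose 2 : ℤ))) with hx
    have hxb : x ≤ b := min_le_left _ _
    have hx1 : a + (j:ℤ) ≤ x := by
      refine le_min hab ?_
      have : (((j+1):ℕ):ℤ) * a + (((j+1).choose 2 : ℕ):ℤ) ≤ c := by push_cast; linarith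
      rw [hC] at this
      push_cast at this
      linarith
    have hmain : (j:ℤ) * a + (j.choose 2 : ℤ) ≤ c - x ∧ c - x ≤ (j:ℤ) * (x-1) - (j.choose 2 : ℤ) := by
      rcases le_total b (c - ((j:ℤ) * a + (j.choose 2 : ℤ))) with h | h
      · have hxe : x = b := min_eq_left h
        constructor
        · rw [hxe]; linarith
        · rw [hxe]; nlinarith
      · have hxe : x = c - ((j:ℤ) * a + (j.choose 2 : ℤ)) := min_eq_right h
        constructor
        · rw [hxe]; linarith
        · have hjx : (j:ℤ) * (a + j) ≤ (j:ℤ) * x := by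
            exact mul_le_mul_of_nonneg_left hx1 hJ
          rw [hxe]; nlinarith
      
    obtain ⟨S, hS, hcard, hsum⟩ := ih a (x-1) (c - x) hmain.1 hmain.2
    have hxS : x ∉ S := by
      intro hmem
      have := Finset.mem_Icc.mp (hS hmem)
      omega
    refine ⟨insert x S, ?_, ?_, ?_⟩
    · refine Finset.insert_subset ?_ (hS.trans ?_)
      · simp [Finset.mem_Icc]; constructor <;> linarith
      · apply Finset.Icc_subset_Icc_right; linarith
    · rw [Finset.card_insert_of_notMem hxS, hcard]
    · rw [Finset.sum_insert hxS, hsum]; ring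

lemma aux_index_sum (s : ℕ → ℤ) (K : ℕ) (a b : ℤ)
    (hval : ∀ v : ℤ, a ≤ v → v ≤ b → ∃ i, 1 ≤ i ∧ i ≤ K ∧ s i = v)
    (S : Finset ℤ) (hS : S ⊆ Finset.Icc a b) :
    ∃ I : Finset ℕ, (∀ i ∈ I, 1 ≤ i ∧ i ≤ K) ∧ ∑ i ∈ I, s i = ∑ x ∈ S, x := by
  classical
  set g : ℤ → ℕ := fun v => if h : ∃ i, 1 ≤ i ∧ i ≤ K ∧ s i = v then h.choose else 0 with hg
  have hgspec : ∀ v ∈ S, 1 ≤ g v ∧ g v ≤ K ∧ s (g v) = v := by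
    intro v hv
    have hvab := Finset.mem_Icc.mp (hS hv)
    have h : ∃ i, 1 ≤ i ∧ i ≤ K ∧ s i = v := hval v hvab.1 hvab.2
    simp only [hg, dif_pos h]
    exact h.choose_spec
  have hinj : ∀ x ∈ S, ∀ y ∈ S, g x = g y → x = y := by
    intro x hx y hy hxy
    have h1 := (hgspec x hx).2.2
    have h2 := (hgspec y hy).2.2
    rw [← h1, ← h2, hxy]
  refine ⟨S.image g, ?_, ?_⟩
  · intro i hi
    obtain ⟨v, hv, rfl⟩ := Finset.mem_image.mp hi
    exact ⟨(hgspec v hv).1, (hgspec v hv).2.1⟩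
  · rw [Finset.sum_image hinj]
    exact Finset.sum_congr rfl fun v hv => (hgspec v hv).2.2


lemma aux_contig2 (R a b c C1 C2 : ℤ) (hR : 1 ≤ R) (haR : a ≤ R^2) (hba : a + 2*R ≤ b)
    (h1 : 2*C1 = (R-1)*(R-2)) (h2 : 2*C2 = R*(R-1)) (h : (R-1)*b - C1 < c) :
    R*a + C2 ≤ c := by
  nlinarith [mul_nonneg (by linarith : (0:ℤ) ≤ R - 1) (by linarith : (0:ℤ) ≤ b - a - 2*R)]

lemma aux_contig3 (R a b c C2 C3 : ℤ) (hR : 1 ≤ R) (haR : a ≤ R^2) (hba : a + 2*R ≤ b)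
    (h2 : 2*C2 = R*(R-1)) (h3 : 2*C3 = (R+1)*R) (h : R*b - C2 < c) :
    (R+1)*a + C3 ≤ c := by
  nlinarith [mul_nonneg (by linarith : (0:ℤ) ≤ R) (by linarith : (0:ℤ) ≤ b - a - 2*R)]

lemma aux_BA5 (R a b C1 C3 : ℤ) (hR : 1 ≤ R) (ha1 : 1 ≤ a) (hba : a + 2*R ≤ b)
    (h1 : 2*C1 = (R-1)*(R-2)) (h3 : 2*C3 = (R+1)*R) :
    ((R-1)*a + C1) + 5 ≤ (R+1)*b - C3 := by
  nlinarith [mul_nonneg (by linarith : (0:ℤ) ≤ R + 1) (by linarith : (0:ℤ) ≤ b - a - 2*R)]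

lemma aux_key (R a b C1 C3 : ℤ) (hR : 1 ≤ R) (ha1 : 1 ≤ a) (hba : a + 2*R ≤ b)
    (h1 : 2*C1 = (R-1)*(R-2)) (h3 : 2*C3 = (R+1)*R) :
    4*(b+1) ≤ 3*(((R+1)*b - C3) - ((R-1)*a + C1) + 1) := by
  nlinarith [mul_nonneg (by linarith : (0:ℤ) ≤ 6*R - 2) (by linarith : (0:ℤ) ≤ b - a - 2*R)]

lemma aux_main (t α : ℝ) (ht : 1 ≤ t) (hα1 : 1 < α)
    (hα2 : α ≤ 1 + 1 / ((⌈t⌉ : ℝ) + 2 * (⌈Real.sqrt t⌉ : ℝ)))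
    (s : ℕ → ℤ)
    (hsl : ∀ n : ℕ, (s n : ℝ) ≤ t * α ^ n)
    (hsu : ∀ n : ℕ, t * α ^ n < (s n : ℝ) + 1) :
    ∃ N : ℕ, ∀ m : ℕ, N ≤ m → ∃ I : Finset ℕ, (∀ i ∈ I, 1 ≤ i) ∧ (m : ℤ) = ∑ i ∈ I, s i := by
  classical
  have ht0 : (0:ℝ) < t := by linarith
  have hα0 : (0:ℝ) < α := by linarith
  set u : ℝ := Real.sqrt t with hu_def
  have hu1 : 1 ≤ u := by
    rw [hu_def, show (1:ℝ) = Real.sqrt 1 by simp]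
    exact Real.sqrt_le_sqrt ht
  have hu2 : u ^ 2 = t := Real.sq_sqrt ht0.le
  set R : ℤ := ⌈u⌉ with hR_def
  set T : ℤ := ⌈t⌉ with hT_def
  have hRu : u ≤ (R:ℝ) := Int.le_ceil u
  have hR1 : (1:ℤ) ≤ R := by exact_mod_cast hu1.trans hRu
  have hTt : t ≤ (T:ℝ) := Int.le_ceil t
  have hT1 : (1:ℤ) ≤ T := by exact_mod_cast ht.trans hTt
  have hTup : (T:ℝ) < t + 1 := Int.ceil_lt_add_one t
  have hRup : (R:ℝ) < u + 1 := Int.ceil_lt_add_one u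
  have hTRz : T ≤ R^2 := by
    have h : t ≤ ((R^2 : ℤ):ℝ) := by push_cast; nlinarith
    exact Int.ceil_le.mpr h
  set D : ℤ := T + 2 * R with hD_def
  have hDlow : u^2 + 2*u ≤ (D:ℝ) := by push_cast [hD_def]; nlinarith
  have hDup : (D:ℝ) ≤ u^2 + 2*u + 3 := by push_cast [hD_def]; nlinarith
  have hD3 : (3:ℝ) ≤ (D:ℝ) := by nlinarith
  have hd0 : (0:ℝ) < (D:ℝ) := by linarith
  have hα2' : α ≤ 1 + 1/(D:ℝ) := by
    have : ((⌈t⌉ : ℝ) + 2 * (⌈Real.sqrt t⌉ : ℝ)) = (D:ℝ) := by push_cast [hD_def]; ring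
    rwa [this] at hα2
  set β : ℝ := α - 1 with hβ_def
  have hβ0 : 0 < β := by rw [hβ_def]; linarith
  have hβD : β * (D:ℝ) ≤ 1 := by
    have h : α - 1 ≤ 1/(D:ℝ) := by linarith
    calc β * (D:ℝ) ≤ (1/(D:ℝ)) * (D:ℝ) := by
          apply mul_le_mul_of_nonneg_right _ hd0.le
          rw [hβ_def]; exact h
      _ = 1 := by field_simp
  have hα43 : α ≤ 4/3 := by
    have h1 : 1/(D:ℝ) ≤ 1/3 := by
      apply one_div_le_one_div_of_le <;> linarith
    linarith
  have htD : t < (D:ℝ) := by nlinarith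
  have htβ : t * β < 1 := by nlinarith [mul_le_mul_of_nonneg_left hβD ht0.le]
  -- basic facts about s
  have hs_pos : ∀ n : ℕ, 1 ≤ s n := by
    intro n
    have hp : (1:ℝ) ≤ α ^ n := one_le_pow₀ hα1.le
    have h1 : (1:ℝ) < (s n : ℝ) + 1 := lt_of_le_of_lt (by nlinarith) (hsu n)
    have : (0:ℤ) < s n := by exact_mod_cast (by linarith : (0:ℝ) < (s n:ℝ))
    omega
  have hgrow : ∀ n : ℕ, 3 * s (n+1) ≤ 4 * (s n + 1) := by
    intro n
    have h1 : (s (n+1) : ℝ) ≤ t * α ^ (n+1) := hsl _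
    have h2 : t * α ^ (n+1) = α * (t * α ^ n) := by ring
    have h3 := hsu n
    have h4 : (0:ℝ) < t * α ^ n := by positivity
    have h5 : α * (t*α^n) ≤ α * ((s n:ℝ)+1) := mul_le_mul_of_nonneg_left h3.le hα0.le
    have h6 : (0:ℝ) < (s n:ℝ)+1 := by linarith
    have h7 : α * ((s n:ℝ)+1) ≤ (4/3) * ((s n:ℝ)+1) := mul_le_mul_of_nonneg_right hα43 h6.le
    have key : (3:ℝ) * ((s (n+1):ℤ):ℝ) ≤ 4 * (((s n:ℤ):ℝ) + 1) := by push_cast; linarith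
    exact_mod_cast key
  -- the predicate and ν
  have hP1 : t * α ^ 1 * β ≤ 1 := by
    have hb2 : β^2 * (D:ℝ)^2 ≤ 1 := by nlinarith [mul_nonneg hβ0.le hd0.le]
    have hu0 : (0:ℝ) < u := by linarith
    have key : u^2*(D:ℝ) + u^2 ≤ (D:ℝ)^2 := by
      nlinarith [mul_nonneg (by linarith : (0:ℝ) ≤ (D:ℝ)-(u^2+2*u)) hd0.le,
        mul_nonneg (by linarith : (0:ℝ) ≤ 2*u) (by linarith : (0:ℝ) ≤ (D:ℝ)-(u^2+2*u)),
        mul_pos (mul_pos hu0 hu0) hu0]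
    have e1 : u^2*β*(D:ℝ)^2 ≤ u^2*(D:ℝ) := by
      nlinarith [mul_le_mul_of_nonneg_left hβD (show (0:ℝ) ≤ u^2*(D:ℝ) by positivity)]
    have e2 : u^2*β^2*(D:ℝ)^2 ≤ u^2 := by
      nlinarith [mul_le_mul_of_nonneg_left hb2 (sq_nonneg u)]
    have goal' : (t * α ^ 1 * β) * (D:ℝ)^2 ≤ 1 * (D:ℝ)^2 := by
      have : t * α ^ 1 * β = u^2 * β + u^2 * β^2 := by
        rw [← hu2, hβ_def]; ring
      rw [this]
      nlinarith
    have hD2 : (0:ℝ) < (D:ℝ)^2 := by positivity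
    exact le_of_mul_le_mul_right goal' hD2
  have hP0 : t * α ^ 0 * β ≤ 1 := by
    have : t * α ^ 0 * β ≤ t * α ^ 1 * β := by
      simp only [pow_zero, pow_one]
      nlinarith [mul_nonneg (mul_nonneg ht0.le hβ0.le) (by linarith : (0:ℝ) ≤ α - 1)]
    linarith
  have hex : ∃ n : ℕ, ¬ (t * α ^ n * β ≤ 1) := by
    obtain ⟨n, hn⟩ := pow_unbounded_of_one_lt (1/(t*β)) hα1
    refine ⟨n, ?_⟩
    push_neg
    have htβ0 : (0:ℝ) < t * β := by positivity
    have := (div_lt_iff₀ htβ0).mp hn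
    nlinarith
  set ν : ℕ := Nat.find hex with hν_def
  have hνP : ¬ (t * α ^ ν * β ≤ 1) := Nat.find_spec hex
  have hν0 : ∀ n, n < ν → t * α ^ n * β ≤ 1 := by
    intro n hn
    exact not_not.mp (Nat.find_min hex hn)
  have hν2 : 2 ≤ ν := by
    by_contra h
    push_neg at h
    have h01 : ν = 0 ∨ ν = 1 := by omega
    rcases h01 with h' | h'
    · rw [h'] at hνP; exact hνP hP0
    · rw [h'] at hνP; exact hνP hP1
  have hstep : ∀ n : ℕ, n < ν → s (n+1) ≤ s n + 1 := by
    intro n hn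
    have h1 : (s (n+1):ℝ) ≤ t * α^(n+1) := hsl _
    have h2 : t * α^(n+1) = t * α^n + t*α^n*β := by rw [hβ_def]; ring
    have h3 := hν0 n hn
    have h4 := hsu n
    have h5 : (s (n+1):ℝ) < (s n:ℝ) + 2 := by nlinarith
    have : s (n+1) < s n + 2 := by exact_mod_cast h5
    omega
  set a : ℤ := s 1 with ha_def
  set b : ℤ := s ν with hb_def
  have hcov : ∀ v : ℤ, a ≤ v → v ≤ b → ∃ i, 1 ≤ i ∧ i ≤ ν ∧ s i = v := by
    have main : ∀ n, 1 ≤ n → n ≤ ν → ∀ v : ℤ, a ≤ v → v ≤ s n → ∃ i, 1 ≤ i ∧ i ≤ n ∧ s i = v := by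
      intro n
      induction n with
      | zero => omega
      | succ n ihn =>
        intro _ hn v hv1 hv2
        by_cases hn0 : n = 0
        · subst hn0
          have hv2' : v ≤ s 1 := by simpa using hv2
          refine ⟨1, le_refl _, le_refl _, ?_⟩
          rw [ha_def] at hv1
          omega
        · have hn1 : 1 ≤ n := Nat.one_le_iff_ne_zero.mpr hn0
          rcases le_or_gt v (s n) with h | h
          · obtain ⟨i, h1, h2, h3⟩ := ihn hn1 (by omega) v hv1 h
            exact ⟨i, h1, by omega, h3⟩
          · have hst := hstep n (by omega)
            exact ⟨n+1, by omega, le_refl _, by omega⟩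
    exact fun v h1 h2 => main ν (by omega) (le_refl _) v h1 h2
  have hbD : D ≤ b := by
    push_neg at hνP
    have h1 : (D:ℝ) * β ≤ 1 := by linarith [hβD]
    have h2 : (D:ℝ) < t * α ^ ν := by nlinarith
    have h3 : (D:ℝ) < (b:ℝ) + 1 := lt_trans h2 (hsu ν)
    have : (D:ℤ) < b + 1 := by exact_mod_cast h3
    omega
  have haT : a ≤ T := by
    have h1 : t * α ^ 1 < (T:ℝ) + 1 := by
      rw [pow_one]
      nlinarith
    have h2 : (a:ℝ) < (T:ℝ) + 1 := lt_of_le_of_lt (hsl 1) h1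
    have : a < T + 1 := by exact_mod_cast h2
    omega
  have ha1 : 1 ≤ a := hs_pos 1
  have hba : a + 2*R ≤ b := by rw [hD_def] at hbD; linarith [haT]
  have haR : a ≤ R^2 := le_trans haT hTRz
  set r : ℕ := R.toNat with hr_def
  have hrR : (r:ℤ) = R := Int.toNat_of_nonneg (by linarith)
  have hr1 : 1 ≤ r := by omega
  have hcast1 : ((r-1:ℕ):ℤ) = R - 1 := by omega
  have hcast2 : ((r+1:ℕ):ℤ) = R + 1 := by omega
  have hc1 : 2*(((r-1).choose 2 : ℕ):ℤ) = (R-1)*(R-2) := by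
    rw [aux_choose_two, hcast1]; ring
  have hc2 : 2*((r.choose 2 : ℕ):ℤ) = R*(R-1) := by
    rw [aux_choose_two, hrR]
  have hc3 : 2*(((r+1).choose 2 : ℕ):ℤ) = (R+1)*R := by
    rw [aux_choose_two, hcast2]; ring
  set A : ℤ := (R-1)*a + ((r-1).choose 2 : ℤ) with hA_def
  set B : ℤ := (R+1)*b - ((r+1).choose 2 : ℤ) with hB_def
  have hblock : ∀ c : ℤ, A ≤ c → c ≤ B → ∃ I : Finset ℕ, (∀ i ∈ I, 1 ≤ i ∧ i ≤ ν) ∧ ∑ i ∈ I, s i = c := by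
    intro c hcA hcB
    rw [hA_def] at hcA
    rw [hB_def] at hcB
    have hget : ∀ (j : ℕ), (j:ℤ)*a + (j.choose 2:ℤ) ≤ c → c ≤ (j:ℤ)*b - (j.choose 2:ℤ) →
        ∃ I : Finset ℕ, (∀ i ∈ I, 1 ≤ i ∧ i ≤ ν) ∧ ∑ i ∈ I, s i = c := by
      intro j hj1 hj2
      obtain ⟨S, hS, hcard, hsum⟩ := aux_subset_sum j a b c hj1 hj2
      obtain ⟨I, hI1, hI2⟩ := aux_index_sum s ν a b hcov S hS
      exact ⟨I, hI1, by rw [hI2, hsum]⟩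
    have hmul1 : (0:ℤ) ≤ (R-1)*(b-a-2*R) := mul_nonneg (by linarith) (by linarith)
    have hmul2 : (0:ℤ) ≤ R*(b-a-2*R) := mul_nonneg (by linarith) (by linarith)
    rcases le_or_gt c ((R-1)*b - ((r-1).choose 2 : ℤ)) with h | h
    · exact hget (r-1) (by rw [hcast1]; linarith) (by rw [hcast1]; exact h)
    · rcases le_or_gt c (R*b - (r.choose 2 : ℤ)) with h2 | h2
      · refine hget r ?_ ?_
        · rw [hrR]; exact aux_contig2 R a b c _ _ hR1 haR hba hc1 hc2 h
        · rw [hrR]; exact h2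
      · refine hget (r+1) ?_ ?_
        · rw [hcast2]; exact aux_contig3 R a b c _ _ hR1 haR hba hc2 hc3 h2
        · rw [hcast2]; exact hcB
  have hBA5 : A + 5 ≤ B := by
    rw [hA_def, hB_def]
    exact aux_BA5 R a b _ _ hR1 ha1 hba hc1 hc3
  have hsν1 : s (ν+1) ≤ B - A + 1 := by
    have hg := hgrow ν
    rw [← hb_def] at hg
    have key : 4*(b+1) ≤ 3*(B - A + 1) := by
      rw [hA_def, hB_def]
      exact aux_key R a b _ _ hR1 ha1 hba hc1 hc3
    linarith
  set Q : ℕ → ℤ := fun M => B + ∑ i ∈ Finset.Ioc ν (ν + M), s i with hQ_def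
  have hQsucc : ∀ M, Q (M+1) = Q M + s (ν + M + 1) := by
    intro M
    simp only [hQ_def]
    rw [show ν + (M+1) = (ν + M) + 1 from rfl, Finset.sum_Ioc_succ_top (Nat.le_add_right ν M)]
    ring
  have hQB : ∀ M, B ≤ Q M := by
    intro M
    simp only [hQ_def]
    have h : 0 ≤ ∑ i ∈ Finset.Ioc ν (ν+M), s i :=
      Finset.sum_nonneg fun i _ => by linarith [hs_pos i]
    linarith
  have main : ∀ M : ℕ, (∀ c : ℤ, A ≤ c → c ≤ Q M →
      ∃ I : Finset ℕ, (∀ i ∈ I, 1 ≤ i ∧ i ≤ ν + M) ∧ ∑ i ∈ I, s i = c) ∧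
      s (ν + M + 1) ≤ Q M - A + 1 := by
    intro M
    induction M with
    | zero =>
      have hQ0 : Q 0 = B := by simp [hQ_def]
      constructor
      · intro c h1 h2
        rw [hQ0] at h2
        exact hblock c h1 h2
      · rw [hQ0]
        exact hsν1
    | succ M ih =>
      obtain ⟨ih1, ih2⟩ := ih
      have hQs := hQsucc M
      constructor
      · intro c h1 h2
        rcases le_or_gt c (Q M) with h | h
        · obtain ⟨I, hI1, hI2⟩ := ih1 c h1 h
          exact ⟨I, fun i hi => ⟨(hI1 i hi).1, by have := (hI1 i hi).2; omega⟩, hI2⟩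
        · have hc1' : A ≤ c - s (ν+M+1) := by linarith [ih2]
          have hc2' : c - s (ν+M+1) ≤ Q M := by
            rw [hQs] at h2
            linarith
          obtain ⟨I, hI1, hI2⟩ := ih1 (c - s (ν+M+1)) hc1' hc2'
          have hnot : (ν+M+1) ∉ I := fun hmem => by have := (hI1 _ hmem).2; omega
          refine ⟨insert (ν+M+1) I, ?_, ?_⟩
          · intro i hi
            rcases Finset.mem_insert.mp hi with rfl | hi'
            · constructor <;> omega
            · have := hI1 i hi'
              constructor
              · exact this.1
              · omega
          · rw [Finset.sum_insert hnot, hI2]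
            ring
      · have hg := hgrow (ν+M+1)
        have hE : 2 ≤ Q M - A + 1 := by linarith [hQB M, hBA5]
        have : ν + (M+1) + 1 = (ν+M+1) + 1 := by omega
        rw [this, hQs]
        linarith [ih2, hg]
  have hA0 : 0 ≤ A := by
    rw [hA_def]
    have h1 : (0:ℤ) ≤ (R-1)*a := mul_nonneg (by linarith) (by linarith)
    have h2 : (0:ℤ) ≤ (((r-1).choose 2 : ℕ):ℤ) := Int.natCast_nonneg _
    linarith
  refine ⟨A.toNat, ?_⟩
  intro m hm
  have hmA : A ≤ (m:ℤ) := Int.toNat_le.mp hm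
  set M : ℕ := ((m:ℤ) - B).toNat with hM_def
  have hQM : (m:ℤ) ≤ Q M := by
    have hcard : (M:ℤ) ≤ ∑ i ∈ Finset.Ioc ν (ν+M), s i := by
      have h1 : ∑ i ∈ Finset.Ioc ν (ν+M), (1:ℤ) ≤ ∑ i ∈ Finset.Ioc ν (ν+M), s i :=
        Finset.sum_le_sum fun i _ => hs_pos i
      have h2 : ∑ i ∈ Finset.Ioc ν (ν+M), (1:ℤ) = (M:ℤ) := by
        rw [Finset.sum_const, Nat.card_Ioc]
        simp
      linarith
    rcases le_total ((m:ℤ)) B with h | h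
    · linarith [hQB M]
    · have h3 : ((m:ℤ) - B) ≤ (M:ℤ) := by
        rw [hM_def, Int.toNat_of_nonneg (by linarith)]
      simp only [hQ_def]
      linarith
  obtain ⟨I, hI1, hI2⟩ := (main M).1 (m:ℤ) hmA hQM
  exact ⟨I, fun i hi => (hI1 i hi).1, hI2.symm⟩

theorem stmt_19 (t α : ℝ) (ht : 1 ≤ t) (hα1 : 1 < α)
    (hα2 : α ≤ 1 + 1 / ((⌈t⌉ : ℝ) + 2 * (⌈Real.sqrt t⌉ : ℝ))) :
    ∃ N : ℕ, ∀ m : ℕ, N ≤ m →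
      ∃ I : Finset ℕ, (∀ i ∈ I, 1 ≤ i) ∧
        (m : ℤ) = ∑ i ∈ I, ⌊t * α ^ i⌋ := by
  exact aux_main t α ht hα1 hα2 (fun n => ⌊t * α ^ n⌋)
    (fun n => Int.floor_le _) (fun n => Int.lt_floor_add_one _)
end
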